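/- arXiv:2201.12345 — 11 statements merged into one kernel-verified Lean document; each statement's English description precedes it below -/
import Mathlib

section
/- For every integer k ≥ 0 and all real x, y with y ≥ −1 and |x| ≤ 1 + y, one has |U_k(x, y)| ≤ 1 + y + y² + … + y^k, and moreover U_k(1 + y, y) = 1 + y + y² + … + y^k. -/
noncomputable def chebU : ℕ → ℝ → ℝ → ℝ
  | 0, _, _ => 1
  | 1, x, _ => x
  | (k + 2), x, y => x * chebU (k + 1) x y - y * chebU k x y

lemma chebU_rec (k : ℕ) (x y : ℝ) :
    chebU (k + 2) x y = x * chebU (k + 1) x y - y * chebU k x y := rfl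

lemma chebU_neg (x y : ℝ) : ∀ k : ℕ,
    chebU k (-x) y = (-1) ^ k * chebU k x y ∧
    chebU (k + 1) (-x) y = (-1) ^ (k + 1) * chebU (k + 1) x y := by
  intro k
  induction k with
  | zero => constructor
            · simp [chebU]
            · show -x = (-1)^1 * x; ring
  | succ n ih =>
      refine ⟨ih.2, ?_⟩
      rw [chebU_rec, chebU_rec, ih.1, ih.2]
      ring

lemma chebU_endpoint (y : ℝ) : ∀ k : ℕ,
    chebU k (1 + y) y = ∑ i ∈ Finset.range (k + 1), y ^ i ∧
    chebU (k + 1) (1 + y) y = ∑ i ∈ Finset.range (k + 2), y ^ i := by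
  intro k
  induction k with
  | zero => constructor
            · simp [chebU]
            · show 1 + y = _; rw [Finset.sum_range_succ, Finset.sum_range_one]; ring
  | succ n ih =>
      refine ⟨ih.2, ?_⟩
      rw [chebU_rec, ih.1, ih.2, geom_sum_succ (x := y) (n := n + 2),
        geom_sum_succ (x := y) (n := n + 1)]
      ring
lemma abs_chebU_of_nonpos (x y : ℝ) (hy : -1 ≤ y) (hy0 : y ≤ 0) (hx : |x| ≤ 1 + y) :
    ∀ k : ℕ, |chebU k x y| ≤ ∑ i ∈ Finset.range (k + 1), y ^ i ∧
      |chebU (k + 1) x y| ≤ ∑ i ∈ Finset.range (k + 2), y ^ i := by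
  rw [abs_le] at hx
  intro k
  induction k with
  | zero =>
      constructor
      · show |(1 : ℝ)| ≤ ∑ i ∈ Finset.range 1, y ^ i
        simp
      · show |x| ≤ ∑ i ∈ Finset.range 2, y ^ i
        rw [abs_le, Finset.sum_range_succ, Finset.sum_range_one]
        constructor
        · simpa using hx.1
        · simpa using hx.2
  | succ n ih =>
      refine ⟨ih.2, ?_⟩
      have hiu := abs_le.mp ih.1
      have hiv := abs_le.mp ih.2
      have hgeo2 : (∑ i ∈ Finset.range (n + 3), y ^ i)
          = y * ∑ i ∈ Finset.range (n + 2), y ^ i + 1 := geom_sum_succ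
      have hgeo1 : (∑ i ∈ Finset.range (n + 2), y ^ i)
          = y * ∑ i ∈ Finset.range (n + 1), y ^ i + 1 := geom_sum_succ
      set A := ∑ i ∈ Finset.range (n + 1), y ^ i
      set A1 := ∑ i ∈ Finset.range (n + 2), y ^ i
      set u := chebU n x y
      set v := chebU (n + 1) x y
      rw [chebU_rec, abs_le, hgeo2]
      have hyneg : 0 ≤ -y := by linarith
      constructor
      · nlinarith [mul_nonneg (by linarith [hx.2] : (0:ℝ) ≤ 1 + y - x) (by linarith [hiv.2] : (0:ℝ) ≤ A1 - v),
          mul_nonneg (by linarith [hx.1] : (0:ℝ) ≤ 1 + y + x) (by linarith [hiv.1] : (0:ℝ) ≤ A1 + v),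
          mul_nonneg hyneg (by linarith [hiu.2] : (0:ℝ) ≤ A - u),
          mul_nonneg hyneg (by linarith [hiu.1] : (0:ℝ) ≤ A + u)]
      · nlinarith [mul_nonneg (by linarith [hx.2] : (0:ℝ) ≤ 1 + y - x) (by linarith [hiv.1] : (0:ℝ) ≤ A1 + v),
          mul_nonneg (by linarith [hx.1] : (0:ℝ) ≤ 1 + y + x) (by linarith [hiv.2] : (0:ℝ) ≤ A1 - v),
          mul_nonneg hyneg (by linarith [hiu.2] : (0:ℝ) ≤ A - u),
          mul_nonneg hyneg (by linarith [hiu.1] : (0:ℝ) ≤ A + u)]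
lemma abs_chebU_of_small (x y : ℝ) (hy : 0 ≤ y) (h4 : x ^ 2 ≤ 4 * y) :
    ∀ k : ℕ, |chebU k x y| ≤ (k + 1) * Real.sqrt y ^ k := by
  set s : ℝ := Real.sqrt (4 * y - x ^ 2) with hs
  have hs2 : s ^ 2 = 4 * y - x ^ 2 := Real.sq_sqrt (by linarith)
  set α : ℂ := ⟨x / 2, s / 2⟩ with hα
  set β : ℂ := ⟨x / 2, -(s / 2)⟩ with hβ
  have hadd : α + β = (x : ℂ) := by
    apply Complex.ext <;> simp [hα, hβ]
  have hmul : α * β = (y : ℂ) := by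
    apply Complex.ext <;>
      simp [hα, hβ, Complex.mul_re, Complex.mul_im] <;> nlinarith [hs2]
  have habs : ‖α‖ = Real.sqrt y := by
    have h1 : ‖α‖ ^ 2 = y := by
      rw [Complex.sq_norm, Complex.normSq_mk]
      nlinarith [hs2]
    calc ‖α‖ = Real.sqrt (‖α‖ ^ 2) := by
          rw [Real.sqrt_sq (norm_nonneg α)]
    _ = Real.sqrt y := by rw [h1]
  have habsβ : ‖β‖ = Real.sqrt y := by
    have h1 : ‖β‖ ^ 2 = y := by
      rw [Complex.sq_norm, Complex.normSq_mk]
      nlinarith [hs2]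
    calc ‖β‖ = Real.sqrt (‖β‖ ^ 2) := by
          rw [Real.sqrt_sq (norm_nonneg β)]
    _ = Real.sqrt y := by rw [h1]
  have key : ∀ k : ℕ, (chebU (k + 1) x y : ℂ) = α * chebU k x y + β ^ (k + 1) := by
    intro k
    induction k with
    | zero =>
        show (x : ℂ) = α * (1 : ℝ) + β ^ 1
        push_cast
        linear_combination hadd.symm
    | succ n ih =>
        rw [chebU_rec]
        push_cast
        linear_combination β * ih - (chebU (n + 1) x y : ℂ) * hadd + (chebU n x y : ℂ) * hmul
  intro k
  induction k with
  | zero => simp [chebU]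
  | succ n ih =>
      have h1 : |chebU (n + 1) x y| = ‖(chebU (n + 1) x y : ℂ)‖ :=
        (by rw [Complex.norm_real, Real.norm_eq_abs])
      rw [h1, key n]
      have h2 : ‖(α * (chebU n x y : ℂ) + β ^ (n + 1))‖
          ≤ Real.sqrt y * |chebU n x y| + Real.sqrt y ^ (n + 1) := by
        calc ‖(α * (chebU n x y : ℂ) + β ^ (n + 1))‖
            ≤ ‖(α * (chebU n x y : ℂ))‖ + ‖(β ^ (n + 1))‖ :=
              norm_add_le _ _
        _ = Real.sqrt y * |chebU n x y| + Real.sqrt y ^ (n + 1) := by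
              rw [norm_mul, norm_pow, habs, habsβ, Complex.norm_real, Real.norm_eq_abs]
      have hsq : 0 ≤ Real.sqrt y := Real.sqrt_nonneg y
      have h3 : Real.sqrt y * |chebU n x y| ≤ Real.sqrt y * ((n + 1) * Real.sqrt y ^ n) :=
        mul_le_mul_of_nonneg_left ih hsq
      have hps : Real.sqrt y ^ (n + 1) = Real.sqrt y ^ n * Real.sqrt y := pow_succ _ _
      push_cast
      push_cast at h3
      nlinarith [h2, h3, hps]

lemma geom_ge_amgm (y : ℝ) (hy : 0 ≤ y) (k : ℕ) :
    (k + 1 : ℝ) * Real.sqrt y ^ k ≤ ∑ i ∈ Finset.range (k + 1), y ^ i := by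
  set r := Real.sqrt y with hr
  have hr0 : 0 ≤ r := Real.sqrt_nonneg y
  have hry : r ^ 2 = y := Real.sq_sqrt hy
  have hterm : ∀ i ∈ Finset.range (k + 1), 2 * r ^ k ≤ r ^ (2 * i) + r ^ (2 * (k - i)) := by
    intro i hi
    have hik : i ≤ k := Nat.lt_succ_iff.mp (Finset.mem_range.mp hi)
    have hkk : r ^ (2 * i) * r ^ (2 * (k - i)) = r ^ k * r ^ k := by
      rw [← pow_add, ← pow_add]
      congr 1
      omega
    nlinarith [sq_nonneg (r ^ i - r ^ (k - i)), sq_nonneg (r ^ (2 * i) - r ^ (2 * (k - i))),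
      hkk, pow_nonneg hr0 (2 * i), pow_nonneg hr0 (2 * (k - i))]
  have hrefl : ∑ i ∈ Finset.range (k + 1), r ^ (2 * (k - i))
      = ∑ i ∈ Finset.range (k + 1), r ^ (2 * i) := by
    have := Finset.sum_range_reflect (fun i => r ^ (2 * i)) (k + 1)
    simpa using this
  have hsum : (k + 1 : ℝ) * (2 * r ^ k) ≤ ∑ i ∈ Finset.range (k + 1),
      (r ^ (2 * i) + r ^ (2 * (k - i))) := by
    calc (k + 1 : ℝ) * (2 * r ^ k) = ∑ _i ∈ Finset.range (k + 1), 2 * r ^ k := by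
          rw [Finset.sum_const, Finset.card_range]; push_cast; ring
    _ ≤ _ := Finset.sum_le_sum hterm
  rw [Finset.sum_add_distrib, hrefl] at hsum
  have hyy : ∀ i, y ^ i = r ^ (2 * i) := by
    intro i; rw [← hry]; exact (pow_mul r 2 i).symm
  calc (k + 1 : ℝ) * r ^ k ≤ ∑ i ∈ Finset.range (k + 1), r ^ (2 * i) := by linarith
  _ = ∑ i ∈ Finset.range (k + 1), y ^ i := by
      refine Finset.sum_congr rfl fun i _ => (hyy i).symm
lemma chebU_of_big (x y : ℝ) (hy : 0 ≤ y) (hx0 : 0 ≤ x) (h4 : 4 * y ≤ x ^ 2)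
    (hx : x ≤ 1 + y) : ∀ k : ℕ,
    0 ≤ chebU k x y ∧ chebU k x y ≤ ∑ i ∈ Finset.range (k + 1), y ^ i := by
  set d : ℝ := Real.sqrt (x ^ 2 - 4 * y) with hd
  have hd2 : d ^ 2 = x ^ 2 - 4 * y := Real.sq_sqrt (by linarith)
  have hd0 : 0 ≤ d := Real.sqrt_nonneg _
  have hdx : d ≤ x := by nlinarith
  set a : ℝ := (x + d) / 2 with ha
  set b : ℝ := (x - d) / 2 with hb
  have hb0 : 0 ≤ b := by rw [hb]; linarith
  have hba : b ≤ a := by rw [ha, hb]; linarith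
  have ha0 : 0 ≤ a := le_trans hb0 hba
  have hadd : a + b = x := by rw [ha, hb]; ring
  have hmul : a * b = y := by rw [ha, hb]; nlinarith [hd2]
  have hquad : 0 ≤ (1 - a) * (1 - b) := by nlinarith [hadd, hmul]
  -- telescoping identity
  have key : ∀ k : ℕ, chebU (k + 1) x y = a * chebU k x y + b ^ (k + 1) := by
    intro k
    induction k with
    | zero =>
        show x = a * 1 + b ^ 1
        rw [← hadd]; ring
    | succ n ih =>
        rw [chebU_rec]
        linear_combination b * ih - chebU (n + 1) x y * hadd + chebU n x y * hmul
  -- key inequality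
  have step : ∀ k : ℕ, a * (∑ i ∈ Finset.range (k + 1), y ^ i) + b ^ (k + 1)
      ≤ ∑ i ∈ Finset.range (k + 2), y ^ i := by
    intro k
    have hgeo : (∑ i ∈ Finset.range (k + 2), y ^ i)
        = y * ∑ i ∈ Finset.range (k + 1), y ^ i + 1 := geom_sum_succ
    have hbT : (∑ i ∈ Finset.range (k + 1), b ^ i) * (b - 1) = b ^ (k + 1) - 1 :=
      geom_sum_mul b (k + 1)
    set S := ∑ i ∈ Finset.range (k + 1), y ^ i with hS
    set T := ∑ i ∈ Finset.range (k + 1), b ^ i with hT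
    rcases le_or_gt 1 b with hb1 | hb1
    · -- b ≥ 1, hence a ≥ 1, and T ≤ a * S
      have ha1 : 1 ≤ a := le_trans hb1 hba
      have hTS : T ≤ a * S := by
        rw [hT, hS, Finset.mul_sum]
        refine Finset.sum_le_sum fun i _ => ?_
        have h1 : y ^ i = a ^ i * b ^ i := by rw [← hmul, mul_pow]
        have h2 : (1 : ℝ) ≤ a ^ (i + 1) := one_le_pow₀ ha1
        calc b ^ i = 1 * b ^ i := (one_mul _).symm
        _ ≤ a ^ (i + 1) * b ^ i := by
            exact mul_le_mul_of_nonneg_right h2 (pow_nonneg hb0 i)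
        _ = a * y ^ i := by rw [h1, pow_succ]; ring
      have hprod : 0 ≤ (b - 1) * (a * S - T) :=
        mul_nonneg (by linarith) (by linarith)
      rw [hgeo, ← hmul]
      nlinarith [hprod, hbT]
    · -- b < 1, hence a ≤ 1, and a * S ≤ T
      have ha1 : a ≤ 1 := by nlinarith [hquad]
      have hTS : a * S ≤ T := by
        rw [hT, hS, Finset.mul_sum]
        refine Finset.sum_le_sum fun i _ => ?_
        have h1 : y ^ i = a ^ i * b ^ i := by rw [← hmul, mul_pow]
        have h2 : a ^ (i + 1) ≤ 1 := pow_le_one₀ ha0 ha1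
        calc a * y ^ i = a ^ (i + 1) * b ^ i := by rw [h1, pow_succ]; ring
        _ ≤ 1 * b ^ i := mul_le_mul_of_nonneg_right h2 (pow_nonneg hb0 i)
        _ = b ^ i := one_mul _
      have hprod : 0 ≤ (1 - b) * (T - a * S) :=
        mul_nonneg (by linarith) (by linarith)
      rw [hgeo, ← hmul]
      nlinarith [hprod, hbT]
  intro k
  induction k with
  | zero =>
      constructor
      · show (0:ℝ) ≤ 1; norm_num
      · show (1:ℝ) ≤ ∑ i ∈ Finset.range 1, y ^ i; simp
  | succ n ih =>
      rw [key n]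
      constructor
      · have := pow_nonneg hb0 (n + 1)
        nlinarith [ih.1]
      · calc a * chebU n x y + b ^ (n + 1)
            ≤ a * (∑ i ∈ Finset.range (n + 1), y ^ i) + b ^ (n + 1) := by
              nlinarith [ih.2]
        _ ≤ _ := step n

theorem abs_chebU_le_geom_sum (k : ℕ) (x y : ℝ) (hy : -1 ≤ y) (hx : |x| ≤ 1 + y) :
    |chebU k x y| ≤ ∑ i ∈ Finset.range (k + 1), y ^ i ∧
      chebU k (1 + y) y = ∑ i ∈ Finset.range (k + 1), y ^ i := by
  refine ⟨?_, (chebU_endpoint y k).1⟩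
  rcases le_or_gt y 0 with hy0 | hy0
  · exact (abs_chebU_of_nonpos x y hy hy0 hx k).1
  · have hy' : 0 ≤ y := hy0.le
    have hxx : |chebU k x y| = |chebU k |x| y| := by
      rcases abs_cases x with ⟨h1, _⟩ | ⟨h1, _⟩
      · rw [h1]
      · rw [h1, (chebU_neg x y k).1, abs_mul, abs_pow, abs_neg, abs_one, one_pow, one_mul]
    rw [hxx]
    have hx0 : 0 ≤ |x| := abs_nonneg x
    rcases le_or_gt (|x| ^ 2) (4 * y) with h4 | h4
    · calc |chebU k |x| y| ≤ (k + 1) * Real.sqrt y ^ k := abs_chebU_of_small |x| y hy' h4 k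
      _ ≤ ∑ i ∈ Finset.range (k + 1), y ^ i := geom_ge_amgm y hy' k
    · have h := chebU_of_big |x| y hy' hx0 h4.le hx k
      rw [abs_of_nonneg h.1]
      exact h.2
end

section
/- For every integer k ≥ 1 and every real x with −2 < x ≤ 2, one has |U_k(x, 1) − U_{k−1}(x, 1)| ≤ 2/√(2 + x). -/
/-- Difference sequence. -/
noncomputable def chebD (x : ℝ) : ℕ → ℝ
  | 0 => 1
  | (k+1) => chebU (k+1) x 1 - chebU k x 1

lemma chebD_rec (x : ℝ) (k : ℕ) :
    chebD x (k+2) = x * chebD x (k+1) - chebD x k := by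
  cases k with
  | zero =>
    show chebU 2 x 1 - chebU 1 x 1 = x * (chebU 1 x 1 - chebU 0 x 1) - 1
    simp [chebU]; ring
  | succ m =>
    show chebU (m+3) x 1 - chebU (m+2) x 1
        = x * (chebU (m+2) x 1 - chebU (m+1) x 1) - (chebU (m+1) x 1 - chebU m x 1)
    rw [show chebU (m+3) x 1 = x * chebU (m+2) x 1 - 1 * chebU (m+1) x 1 from rfl,
        show chebU (m+2) x 1 = x * chebU (m+1) x 1 - 1 * chebU m x 1 from rfl]
    ring

lemma chebD_inv (x : ℝ) (k : ℕ) :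
    (chebD x (k+1))^2 - x * chebD x (k+1) * chebD x k + (chebD x k)^2 = 2 - x := by
  induction k with
  | zero =>
    show (chebU 1 x 1 - chebU 0 x 1)^2 - x * (chebU 1 x 1 - chebU 0 x 1) * 1 + 1^2 = 2 - x
    simp [chebU]; ring
  | succ m ih =>
    rw [chebD_rec]
    linear_combination ih

lemma chebD_two (k : ℕ) : chebD 2 k = 1 := by
  induction k with
  | zero => rfl
  | succ m ih =>
    have h := chebD_inv 2 m
    rw [ih] at h
    have h2 : (chebD 2 (m+1) - 1)^2 = 0 := by linear_combination h
    have := pow_eq_zero_iff (n := 2) (by norm_num) |>.mp h2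
    linarith

theorem abs_chebU_sub_chebU_le (k : ℕ) (hk : 1 ≤ k) (x : ℝ) (hx1 : -2 < x) (hx2 : x ≤ 2) :
    |chebU k x 1 - chebU (k - 1) x 1| ≤ 2 / Real.sqrt (2 + x) := by
  obtain ⟨m, rfl⟩ : ∃ m, k = m + 1 := ⟨k - 1, (Nat.succ_pred_eq_of_pos hk).symm⟩
  have hD : chebU (m+1) x 1 - chebU (m+1-1) x 1 = chebD x (m+1) := by
    simp [chebD]
  rw [hD]
  have hx0 : (0:ℝ) < 2 + x := by linarith
  have hs4 : Real.sqrt 4 = 2 := by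
    rw [show (4:ℝ) = 2^2 by norm_num, Real.sqrt_sq (by norm_num)]
  rcases eq_or_lt_of_le hx2 with h2 | h2
  · subst h2
    rw [chebD_two]
    norm_num [hs4]
  · have h2' : (0:ℝ) < 2 - x := by linarith
    have h1 := chebD_inv x m
    set A := chebD x (m+1)
    set B := chebD x m
    have hsq : A^2 * (2+x) ≤ 4 := by
      nlinarith [sq_nonneg (2*B - x*A), h1, h2', hx0]
    have hle : A^2 ≤ 4 / (2+x) := (le_div_iff₀ hx0).mpr hsq
    calc |A| = Real.sqrt (A^2) := (Real.sqrt_sq_eq_abs A).symm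
      _ ≤ Real.sqrt (4 / (2+x)) := Real.sqrt_le_sqrt hle
      _ = 2 / Real.sqrt (2+x) := by
          rw [Real.sqrt_div (by norm_num) (2+x), hs4]
end

section
/- For every integer k ≥ 1 and all real x, y with 4y − x² > 0, x ≥ 0, |y| < 1 and |x| < y + 1 (the region Ω₁), one has |U_k(x, y) − √y · U_{k−1}(x, y)| ≤ √(2·y^k). -/
lemma chebU_invariant (n : ℕ) (x y : ℝ) :
    chebU (n + 1) x y ^ 2 - x * chebU (n + 1) x y * chebU n x y
      + y * chebU n x y ^ 2 = y ^ (n + 1) := by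
  induction n with
  | zero => simp [chebU]; ring
  | succ n ih =>
    have h : chebU (n + 2) x y = x * chebU (n + 1) x y - y * chebU n x y := rfl
    rw [h]
    linear_combination y * ih

theorem abs_chebU_sub_sqrt_mul_le (k : ℕ) (hk : 1 ≤ k) (x y : ℝ)
    (h1 : 0 < 4 * y - x ^ 2) (h2 : 0 ≤ x) (h3 : |y| < 1) (h4 : |x| < y + 1) :
    |chebU k x y - Real.sqrt y * chebU (k - 1) x y| ≤ Real.sqrt (2 * y ^ k) := by
  obtain ⟨n, rfl⟩ : ∃ n, k = n + 1 := ⟨k - 1, (Nat.succ_pred_eq_of_pos hk).symm⟩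
  simp only [Nat.add_sub_cancel]
  have hy : 0 < y := by nlinarith
  set s := Real.sqrt y with hs
  have hs0 : 0 ≤ s := Real.sqrt_nonneg y
  have hs2 : s ^ 2 = y := Real.sq_sqrt hy.le
  have hx2s : x ≤ 2 * s := by nlinarith
  set a := chebU (n + 1) x y
  set b := chebU n x y
  have key : a ^ 2 - x * a * b + y * b ^ 2 = y ^ (n + 1) := chebU_invariant n x y
  have h5 : (a - s * b) ^ 2 ≤ 2 * y ^ (n + 1) := by
    nlinarith [sq_nonneg (a + (s - x) * b), sq_nonneg b,
      mul_nonneg (mul_nonneg h2 (by linarith : (0:ℝ) ≤ 2 * s - x)) (sq_nonneg b)]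
  calc |a - s * b| = Real.sqrt ((a - s * b) ^ 2) := (Real.sqrt_sq_eq_abs _).symm
    _ ≤ Real.sqrt (2 * y ^ (n + 1)) := Real.sqrt_le_sqrt h5
end

section
/- For every integer k ≥ 1 and all real x, y with 4y − x² > 0, x ≥ 0, |y| < 1 and |x| < y + 1 (the region Ω₁), one has |U_k(x, y) − y·U_{k−1}(x, y)| ≤ √2. -/
set_option maxHeartbeats 1000000

private lemma aux_pow (r : ℝ) (h0 : 0 ≤ r) : ∀ k : ℕ, r ^ k * (1 + k * (1 - r)) ≤ 1 := by
  intro k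
  induction k with
  | zero => simp
  | succ n ih =>
    have hpow : (0:ℝ) ≤ r ^ n := pow_nonneg h0 n
    have hn : (0:ℝ) ≤ n := Nat.cast_nonneg n
    have key : r * (1 + ((n:ℝ) + 1) * (1 - r)) ≤ 1 + n * (1 - r) := by nlinarith [sq_nonneg (1 - r)]
    calc r ^ (n+1) * (1 + (n+1 : ℕ) * (1 - r)) = r ^ n * (r * (1 + ((n:ℝ) + 1) * (1 - r))) := by
          push_cast; ring
      _ ≤ r ^ n * (1 + n * (1 - r)) := mul_le_mul_of_nonneg_left key hpow
      _ ≤ 1 := ih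

private lemma aux_sin (θ : ℝ) (hs : 0 ≤ Real.sin θ) : ∀ k : ℕ, |Real.sin (k * θ)| ≤ k * Real.sin θ := by
  intro k
  induction k with
  | zero => simp
  | succ n ih =>
    have h1 : ((n:ℝ) + 1) * θ = n * θ + θ := by ring
    have hb1 : |Real.sin (n * θ)| * |Real.cos θ| ≤ (n : ℝ) * Real.sin θ * 1 :=
      mul_le_mul ih (Real.abs_cos_le_one θ) (abs_nonneg _) (by positivity)
    have hb2 : |Real.cos ((n:ℝ) * θ)| * Real.sin θ ≤ 1 * Real.sin θ :=
      mul_le_mul_of_nonneg_right (Real.abs_cos_le_one _) hs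
    calc |Real.sin ((n + 1 : ℕ) * θ)| = |Real.sin ((n:ℝ) * θ) * Real.cos θ + Real.cos ((n:ℝ) * θ) * Real.sin θ| := by
          push_cast; rw [h1, Real.sin_add]
      _ ≤ |Real.sin ((n:ℝ) * θ)| * |Real.cos θ| + |Real.cos ((n:ℝ) * θ)| * Real.sin θ := by
          refine (abs_add_le _ _).trans ?_
          rw [abs_mul, abs_mul, abs_of_nonneg hs]
      _ ≤ (n : ℝ) * Real.sin θ * 1 + 1 * Real.sin θ := add_le_add hb1 hb2
      _ = ((n + 1 : ℕ) : ℝ) * Real.sin θ := by push_cast; ring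

private lemma chebU_closed (r θ : ℝ) :
    ∀ n : ℕ, chebU n (2 * r * Real.cos θ) (r ^ 2) * Real.sin θ = r ^ n * Real.sin ((n + 1) * θ) := by
  intro n
  induction n using Nat.twoStepInduction with
  | zero => simp [chebU]
  | one => simp [chebU]; rw [show ((1:ℝ)+1)*θ = θ + θ by ring, Real.sin_add]; ring
  | more n ih1 ih2 =>
    have e1 : ((n:ℝ) + 2 + 1) * θ = ((n:ℝ) + 1 + 1) * θ + θ := by ring
    have e2 : ((n:ℝ) + 1) * θ = ((n:ℝ) + 1 + 1) * θ - θ := by ring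
    show (2 * r * Real.cos θ * chebU (n+1) _ _ - r^2 * chebU n _ _) * Real.sin θ = _
    push_cast at ih1 ih2 ⊢
    rw [e1, Real.sin_add]
    rw [e2, Real.sin_sub] at ih1
    linear_combination (2 * r * Real.cos θ) * ih2 - r ^ 2 * ih1

theorem abs_chebU_sub_y_mul_le_sqrt_two_Omega1 (k : ℕ) (hk : 1 ≤ k) (x y : ℝ)
    (h1 : 0 < 4 * y - x ^ 2) (h2 : 0 ≤ x) (h3 : |y| < 1) (h4 : |x| < y + 1) :
    |chebU k x y - y * chebU (k - 1) x y| ≤ Real.sqrt 2 := by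
  obtain ⟨j, rfl⟩ : ∃ j, k = j + 1 := ⟨k - 1, (Nat.succ_pred_eq_of_pos hk).symm⟩
  have hy0 : 0 < y := by nlinarith [sq_nonneg x]
  have hy1 : y < 1 := lt_of_le_of_lt (le_abs_self y) h3
  set r : ℝ := Real.sqrt y with hr
  have hr0 : 0 < r := Real.sqrt_pos.2 hy0
  have hr2 : r ^ 2 = y := Real.sq_sqrt hy0.le
  have hr1 : r < 1 := by
    rw [show (1:ℝ) = Real.sqrt 1 by simp [Real.sqrt_one]]
    exact Real.sqrt_lt_sqrt hy0.le hy1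
  have hx2r : x < 2 * r := by
    have : x ^ 2 < (2 * r) ^ 2 := by nlinarith
    exact lt_of_pow_lt_pow_left₀ 2 (by positivity) this
  set u : ℝ := x / (2 * r) with hu
  have hu0 : 0 ≤ u := div_nonneg h2 (by positivity)
  have hu1 : u < 1 := (div_lt_one (by positivity)).2 hx2r
  set θ : ℝ := Real.arccos u with hθ
  have hcos : Real.cos θ = u := Real.cos_arccos (by linarith) hu1.le
  have hsin : Real.sin θ = Real.sqrt (1 - u ^ 2) := by
    rw [hθ, Real.sin_arccos]
  have hsin0 : 0 < Real.sin θ := by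
    rw [hsin]; apply Real.sqrt_pos.2; nlinarith
  have hxeq : x = 2 * r * Real.cos θ := by
    rw [hcos, hu]; field_simp
  have key : ∀ n : ℕ, chebU n x y * Real.sin θ = r ^ n * Real.sin ((n + 1) * θ) := by
    intro n
    rw [hxeq, ← hr2]
    exact chebU_closed r θ n
  -- the main quantity
  set V : ℝ := chebU (j+1) x y - y * chebU (j+1-1) x y with hV
  have hVs : V * Real.sin θ = r ^ (j+1) *
      (Real.sin θ * Real.cos (((j:ℝ)+1) * θ) + (Real.cos θ - r) * Real.sin (((j:ℝ)+1) * θ)) := by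
    have k1 := key (j+1)
    have k2 := key j
    have e3 : ((j:ℝ) + 1 + 1) * θ = ((j:ℝ)+1) * θ + θ := by ring
    rw [hV]
    push_cast at k1 k2 ⊢
    rw [e3, Real.sin_add] at k1
    try simp only [Nat.add_sub_cancel]
    linear_combination k1 - y * k2 + (r ^ j * Real.sin (((j:ℝ)+1) * θ)) * hr2
  have habs : |Real.sin ((j+1:ℕ) * θ)| ≤ (j+1 : ℕ) * Real.sin θ := aux_sin θ hsin0.le (j+1)
  push_cast at habs
  have hck : |Real.cos (((j:ℝ)+1) * θ)| ≤ 1 := Real.abs_cos_le_one _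
  rcases le_or_gt r (Real.cos θ) with hc | hc
  · -- case cos θ ≥ r : |V| ≤ 1
    have hb : |V| * Real.sin θ ≤ 1 * Real.sin θ := by
      have hp : (0:ℝ) ≤ r ^ (j+1) := by positivity
      calc |V| * Real.sin θ = |V * Real.sin θ| := by
            rw [abs_mul, abs_of_nonneg hsin0.le]
        _ = r ^ (j+1) * |Real.sin θ * Real.cos (((j:ℝ)+1) * θ) + (Real.cos θ - r) * Real.sin (((j:ℝ)+1) * θ)| := by
            rw [hVs, abs_mul, abs_of_nonneg hp]
        _ ≤ r ^ (j+1) * (Real.sin θ * 1 + (1 - r) * (((j:ℝ)+1) * Real.sin θ)) := by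
            apply mul_le_mul_of_nonneg_left _ hp
            refine (abs_add_le _ _).trans ?_
            rw [abs_mul, abs_mul, abs_of_nonneg hsin0.le, abs_of_nonneg (by linarith : (0:ℝ) ≤ Real.cos θ - r)]
            have hcos1 : Real.cos θ ≤ 1 := Real.cos_le_one θ
            have t1 : Real.sin θ * |Real.cos (((j:ℝ)+1) * θ)| ≤ Real.sin θ * 1 :=
              mul_le_mul_of_nonneg_left hck hsin0.le
            have t2 : (Real.cos θ - r) * |Real.sin (((j:ℝ)+1) * θ)| ≤ (1 - r) * (((j:ℝ)+1) * Real.sin θ) :=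
              mul_le_mul (by linarith) habs (abs_nonneg _) (by linarith)
            exact add_le_add t1 t2
        _ = (r ^ (j+1) * (1 + ((j:ℝ)+1) * (1 - r))) * Real.sin θ := by ring
        _ ≤ 1 * Real.sin θ := by
            apply mul_le_mul_of_nonneg_right _ hsin0.le
            have := aux_pow r hr0.le (j+1)
            push_cast at this
            linarith
    have hV1 : |V| ≤ 1 := le_of_mul_le_mul_right (by linarith) hsin0
    have : (1:ℝ) ≤ Real.sqrt 2 := by
      rw [show (1:ℝ) = Real.sqrt 1 by simp]
      exact Real.sqrt_le_sqrt (by norm_num)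
    linarith
  · -- case cos θ < r : V^2 ≤ 2
    have hsq : V ^ 2 * Real.sin θ ^ 2 ≤ 2 * Real.sin θ ^ 2 := by
      have cauchy : (Real.sin θ * Real.cos (((j:ℝ)+1) * θ) + (Real.cos θ - r) * Real.sin (((j:ℝ)+1) * θ)) ^ 2
          ≤ Real.sin θ ^ 2 + (Real.cos θ - r) ^ 2 := by
        have pyth : Real.sin (((j:ℝ)+1) * θ) ^ 2 + Real.cos (((j:ℝ)+1) * θ) ^ 2 = 1 :=
          Real.sin_sq_add_cos_sq _
        nlinarith [sq_nonneg (Real.sin θ * Real.sin (((j:ℝ)+1)*θ) - (Real.cos θ - r) * Real.cos (((j:ℝ)+1)*θ))]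
      have hrk : (r ^ (j+1)) ^ 2 ≤ r ^ 2 := by
        have : r ^ (j+1) ≤ r ^ 1 := pow_le_pow_of_le_one hr0.le hr1.le (by omega)
        rw [pow_one] at this
        nlinarith [pow_nonneg hr0.le (j+1)]
      have pyth1 : Real.sin θ ^ 2 + Real.cos θ ^ 2 = 1 := Real.sin_sq_add_cos_sq θ
      have hcos0 : 0 ≤ Real.cos θ := by rw [hcos]; exact hu0
      have final : r ^ 2 * (Real.sin θ ^ 2 + (Real.cos θ - r) ^ 2) ≤ 2 * Real.sin θ ^ 2 := by
        nlinarith [mul_nonneg hcos0 (sub_nonneg.2 hc.le),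
          mul_nonneg (mul_nonneg hcos0 (sub_nonneg.2 hc.le)) hr0.le,
          mul_nonneg (sub_nonneg.2 hc.le) (by nlinarith : (0:ℝ) ≤ 2 - r^2 - r^4),
          mul_nonneg hcos0 (by nlinarith : (0:ℝ) ≤ (1 - r^2) * (2 - r^2))]
      calc V ^ 2 * Real.sin θ ^ 2 = (V * Real.sin θ) ^ 2 := by ring
        _ = (r ^ (j+1)) ^ 2 * (Real.sin θ * Real.cos (((j:ℝ)+1) * θ) + (Real.cos θ - r) * Real.sin (((j:ℝ)+1) * θ)) ^ 2 := by
            rw [hVs]; ring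
        _ ≤ r ^ 2 * (Real.sin θ ^ 2 + (Real.cos θ - r) ^ 2) := by
            apply mul_le_mul hrk cauchy (sq_nonneg _) (by positivity)
        _ ≤ 2 * Real.sin θ ^ 2 := final
    have hV2 : V ^ 2 ≤ 2 := le_of_mul_le_mul_right (by nlinarith [sq_nonneg (Real.sin θ)]) (by positivity)
    calc |V| = Real.sqrt (V ^ 2) := (Real.sqrt_sq_eq_abs V).symm
      _ ≤ Real.sqrt 2 := Real.sqrt_le_sqrt hV2
end

section
/- For every integer k ≥ 0, all real x and all real y > 0, setting ξ = x/√y, one has U_k(x, y) = (√y)^k · Σ_{i=0}^{k} C(k + i + 1, 2i + 1)·(ξ − 2)^i, where C(n, m) denotes the binomial coefficient. -/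
noncomputable def chebS (k : ℕ) (u : ℝ) : ℝ :=
  ∑ i ∈ Finset.range (k + 1), ((k + i + 1).choose (2 * i + 1) : ℝ) * u ^ i

lemma chebS_ext (k N : ℕ) (h : k + 1 ≤ N) (u : ℝ) :
    chebS k u = ∑ i ∈ Finset.range N, ((k + i + 1).choose (2 * i + 1) : ℝ) * u ^ i := by
  unfold chebS
  apply Finset.sum_subset
  · exact Finset.range_subset_range.mpr h
  · intro i _ hi
    have hik : k + 1 ≤ i := by simpa using hi
    have : (k + i + 1).choose (2 * i + 1) = 0 :=
      Nat.choose_eq_zero_of_lt (by omega)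
    simp [this]

lemma pascal_key (k j : ℕ) :
    (k + j + 4).choose (2 * j + 3) + (k + j + 2).choose (2 * j + 3)
      = (k + j + 2).choose (2 * j + 1) + 2 * (k + j + 3).choose (2 * j + 3) := by
  have h1 : (k + j + 4).choose (2 * j + 3)
      = (k + j + 3).choose (2 * j + 2) + (k + j + 3).choose (2 * j + 3) := by
    rw [show k + j + 4 = (k + j + 3) + 1 by rfl, show 2 * j + 3 = (2 * j + 2) + 1 by rfl,
      Nat.choose_succ_succ]
  have h2 : (k + j + 3).choose (2 * j + 2)
      = (k + j + 2).choose (2 * j + 1) + (k + j + 2).choose (2 * j + 2) := by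
    rw [show k + j + 3 = (k + j + 2) + 1 by rfl, show 2 * j + 2 = (2 * j + 1) + 1 by rfl,
      Nat.choose_succ_succ]
  have h3 : (k + j + 3).choose (2 * j + 3)
      = (k + j + 2).choose (2 * j + 2) + (k + j + 2).choose (2 * j + 3) := by
    rw [show k + j + 3 = (k + j + 2) + 1 by rfl, show 2 * j + 3 = (2 * j + 2) + 1 by rfl,
      Nat.choose_succ_succ]
  omega

lemma chebS_rec (k : ℕ) (u : ℝ) :
    chebS (k + 2) u = (u + 2) * chebS (k + 1) u - chebS k u := by
  have hA : chebS (k + 2) u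
      = ∑ i ∈ Finset.range (k + 3), ((k + i + 3).choose (2 * i + 1) : ℝ) * u ^ i := by
    unfold chebS
    apply Finset.sum_congr rfl
    intro i _
    rw [show k + 2 + i + 1 = k + i + 3 from by omega]
  have hB : chebS (k + 1) u
      = ∑ i ∈ Finset.range (k + 3), ((k + i + 2).choose (2 * i + 1) : ℝ) * u ^ i := by
    rw [chebS_ext (k + 1) (k + 3) (by omega)]
    apply Finset.sum_congr rfl
    intro i _
    rw [show k + 1 + i + 1 = k + i + 2 from by omega]
  have hC : chebS k u
      = ∑ i ∈ Finset.range (k + 3), ((k + i + 1).choose (2 * i + 1) : ℝ) * u ^ i := by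
    rw [chebS_ext k (k + 3) (by omega)]
  rw [hA, hB, hC]
  -- expand (u+2) * sum
  rw [add_mul, Finset.mul_sum, Finset.mul_sum]
  -- u * (b_i u^i) = b_i u^(i+1)
  have hshift : ∑ i ∈ Finset.range (k + 3), u * (((k + i + 2).choose (2 * i + 1) : ℝ) * u ^ i)
      = ∑ i ∈ Finset.range (k + 2), ((k + i + 2).choose (2 * i + 1) : ℝ) * u ^ (i + 1) := by
    rw [Finset.sum_range_succ]
    have : (k + (k + 2) + 2).choose (2 * (k + 2) + 1) = 0 :=
      Nat.choose_eq_zero_of_lt (by omega)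
    rw [this]
    simp only [Nat.cast_zero, zero_mul, mul_zero, add_zero]
    apply Finset.sum_congr rfl
    intro i _
    ring
  rw [hshift]
  -- peel the i = 0 term from the remaining three range (k+3) sums
  rw [Finset.sum_range_succ' (fun i => ((k + i + 3).choose (2 * i + 1) : ℝ) * u ^ i),
    Finset.sum_range_succ' (fun i => 2 * (((k + i + 2).choose (2 * i + 1) : ℝ) * u ^ i)),
    Finset.sum_range_succ' (fun i => ((k + i + 1).choose (2 * i + 1) : ℝ) * u ^ i)]
  have hterm : ∀ j ∈ Finset.range (k + 2),
      ((k + (j + 1) + 3).choose (2 * (j + 1) + 1) : ℝ) * u ^ (j + 1)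
        = ((k + j + 2).choose (2 * j + 1) : ℝ) * u ^ (j + 1)
          + 2 * (((k + (j + 1) + 2).choose (2 * (j + 1) + 1) : ℝ) * u ^ (j + 1))
          - ((k + (j + 1) + 1).choose (2 * (j + 1) + 1) : ℝ) * u ^ (j + 1) := by
    intro j _
    have h := pascal_key k j
    have h' : ((k + j + 4).choose (2 * j + 3) : ℝ) + (k + j + 2).choose (2 * j + 3)
        = (k + j + 2).choose (2 * j + 1) + 2 * (k + j + 3).choose (2 * j + 3) := by
      exact_mod_cast h
    have e1 : k + (j + 1) + 3 = k + j + 4 := by omega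
    have e2 : 2 * (j + 1) + 1 = 2 * j + 3 := by omega
    have e3 : k + (j + 1) + 2 = k + j + 3 := by omega
    have e4 : k + (j + 1) + 1 = k + j + 2 := by omega
    rw [e1, e2, e3, e4]
    linear_combination h' * u ^ (j + 1)
  rw [Finset.sum_congr rfl hterm]
  have hconst : ((k + 0 + 3).choose (2 * 0 + 1) : ℝ) * u ^ 0
      + ((k + 0 + 1).choose (2 * 0 + 1) : ℝ) * u ^ 0
      = 2 * (((k + 0 + 2).choose (2 * 0 + 1) : ℝ) * u ^ 0) := by
    simp [Nat.choose_one_right]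
    push_cast
    ring
  simp only [Finset.sum_sub_distrib, Finset.sum_add_distrib]
  linarith [hconst]

theorem chebU_eq_taylor_sum (k : ℕ) (x y : ℝ) (hy : 0 < y) :
    chebU k x y =
      (Real.sqrt y) ^ k *
        ∑ i ∈ Finset.range (k + 1),
          (Nat.choose (k + i + 1) (2 * i + 1) : ℝ) * (x / Real.sqrt y - 2) ^ i := by
  have hs : (0:ℝ) < Real.sqrt y := Real.sqrt_pos.mpr hy
  have hsq : Real.sqrt y * Real.sqrt y = y := Real.mul_self_sqrt hy.le
  set s := Real.sqrt y with hsdef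
  set u := x / s - 2 with hu
  have hx : x = s * (u + 2) := by
    field_simp [hu]
    have hxs : s * (x / s) = x := by field_simp
    linear_combination (-s) * hu - hxs
  suffices h : ∀ k : ℕ, chebU k x y = s ^ k * chebS k u by
    simpa [chebS] using h k
  intro k
  induction k using Nat.twoStepInduction with
  | zero =>
    simp [chebU, chebS]
  | one =>
    have : chebS 1 u = u + 2 := by
      simp [chebS, Finset.sum_range_succ]
      push_cast
      ring
    rw [show chebU 1 x y = x from rfl, this, pow_one, ← hx]
  | more n ih1 ih2 =>
    rw [show chebU (n + 2) x y = x * chebU (n + 1) x y - y * chebU n x y from rfl,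
      ih1, ih2, chebS_rec, hx, ← hsq]
    ring
end

section
/- For every integer k ≥ 1, all real x and all real y > 0, setting ξ = x/√y, one has U_k(x, y) − √y · U_{k−1}(x, y) = (√y)^k · Σ_{i=0}^{k} C(k + i, 2i)·(ξ − 2)^i, where C(n, m) denotes the binomial coefficient. -/
lemma chooseId (a j : ℕ) :
    (a+2).choose (2*j+2) + a.choose (2*j+2) = a.choose (2*j) + 2 * (a+1).choose (2*j+2) := by
  have h1 : (a+2).choose (2*j+2) = (a+1).choose (2*j+1) + (a+1).choose (2*j+2) :=
    Nat.choose_succ_succ _ _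
  have h2 : (a+1).choose (2*j+2) = a.choose (2*j+1) + a.choose (2*j+2) :=
    Nat.choose_succ_succ _ _
  have h3 : (a+1).choose (2*j+1) = a.choose (2*j) + a.choose (2*j+1) :=
    Nat.choose_succ_succ _ _
  omega

lemma sumrec (s : ℝ) (n : ℕ) :
    ∑ i ∈ Finset.range (n+3), ((n+2+i).choose (2*i) : ℝ) * s^i
      = (s+2) * (∑ i ∈ Finset.range (n+2), ((n+1+i).choose (2*i) : ℝ) * s^i)
        - ∑ i ∈ Finset.range (n+1), ((n+i).choose (2*i) : ℝ) * s^i := by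
  rw [add_mul, Finset.mul_sum]
  -- peel off i = 0 from the LHS
  rw [Finset.sum_range_succ' (fun i => ((n+2+i).choose (2*i) : ℝ) * s^i) (n+2)]
  -- peel off i = 0 from 2 * (middle sum)
  have h2sum : (2:ℝ) * (∑ i ∈ Finset.range (n+2), ((n+1+i).choose (2*i) : ℝ) * s^i)
      = (∑ j ∈ Finset.range (n+2), 2 * (((n+1+(j+1)).choose (2*(j+1)) : ℝ) * s^(j+1))) + 2 := by
    rw [Finset.mul_sum, Finset.sum_range_succ' (fun i => 2*(((n+1+i).choose (2*i) : ℝ) * s^i)) (n+1),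
        Finset.sum_range_succ (fun j => 2*(((n+1+(j+1)).choose (2*(j+1)) : ℝ) * s^(j+1))) (n+1)]
    have : ((n+1+(n+1+1)).choose (2*(n+1+1)) : ℝ) = 0 := by
      rw [Nat.choose_eq_zero_of_lt (by omega)]; norm_num
    rw [this]
    norm_num
  have h3sum : (∑ i ∈ Finset.range (n+1), ((n+i).choose (2*i) : ℝ) * s^i)
      = (∑ j ∈ Finset.range (n+2), ((n+(j+1)).choose (2*(j+1)) : ℝ) * s^(j+1)) + 1 := by
    rw [Finset.sum_range_succ' (fun i => ((n+i).choose (2*i) : ℝ) * s^i) n,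
        Finset.sum_range_succ (fun j => ((n+(j+1)).choose (2*(j+1)) : ℝ) * s^(j+1)) (n+1),
        Finset.sum_range_succ (fun j => ((n+(j+1)).choose (2*(j+1)) : ℝ) * s^(j+1)) n]
    have e1 : ((n+(n+1)).choose (2*(n+1)) : ℝ) = 0 := by
      rw [Nat.choose_eq_zero_of_lt (by omega)]; norm_num
    have e2 : ((n+(n+1+1)).choose (2*(n+1+1)) : ℝ) = 0 := by
      rw [Nat.choose_eq_zero_of_lt (by omega)]; norm_num
    rw [e1, e2]
    norm_num
  rw [h2sum, h3sum]
  have key : ∀ j ∈ Finset.range (n+2),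
      ((n+2+(j+1)).choose (2*(j+1)) : ℝ) * s^(j+1)
        + ((n+(j+1)).choose (2*(j+1)) : ℝ) * s^(j+1)
      = s * (((n+1+j).choose (2*j) : ℝ) * s^j)
        + 2 * (((n+1+(j+1)).choose (2*(j+1)) : ℝ) * s^(j+1)) := by
    intro j _
    have hnat := chooseId (n+1+j) j
    have : ((n+2+(j+1)).choose (2*(j+1)) : ℝ) + ((n+(j+1)).choose (2*(j+1)) : ℝ)
        = ((n+1+j).choose (2*j) : ℝ) + 2 * ((n+1+(j+1)).choose (2*(j+1)) : ℝ) := by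
      have e1 : n+2+(j+1) = (n+1+j)+2 := by ring
      have e2 : n+(j+1) = n+1+j := by ring
      have e3 : n+1+(j+1) = (n+1+j)+1 := by ring
      have e4 : 2*(j+1) = 2*j+2 := by ring
      rw [e1, e2, e3, e4]
      exact_mod_cast hnat
    have hs : s^(j+1) = s * s^j := by ring
    linear_combination s^(j+1) * this + ((n+1+j).choose (2*j) : ℝ) * hs
  have hsum := Finset.sum_congr rfl key
  rw [Finset.sum_add_distrib, Finset.sum_add_distrib] at hsum
  have hc : ((n+2+0).choose (2*0) : ℝ) * s^0 = 1 := by norm_num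
  rw [hc]
  linarith [hsum]

lemma chebU_scale (x y : ℝ) (hy : 0 < y) :
    ∀ k, chebU k x y = (Real.sqrt y) ^ k * chebU k (x / Real.sqrt y) 1 := by
  have hs : Real.sqrt y ≠ 0 := ne_of_gt (Real.sqrt_pos.mpr hy)
  have hsq : Real.sqrt y * Real.sqrt y = y := Real.mul_self_sqrt hy.le
  intro k
  induction k using Nat.twoStepInduction with
  | zero => simp [chebU]
  | one => simp only [chebU, pow_one]; field_simp
  | more n ih1 ih2 =>
    show chebU (n+2) x y = _
    rw [chebU, ih1, ih2, chebU]
    have e1 : (Real.sqrt y)^(n+2) = (Real.sqrt y)^n * y := by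
      rw [pow_succ, pow_succ, mul_assoc, hsq]
    have e2 : Real.sqrt y * (x / Real.sqrt y) = x := by field_simp
    linear_combination (-(chebU (n+1) (x/Real.sqrt y) 1 * (Real.sqrt y)^(n+1))) * e2
      + chebU n (x/Real.sqrt y) 1 * e1

lemma onevar (t : ℝ) : ∀ k, chebU (k+1) t 1 - chebU k t 1
    = ∑ i ∈ Finset.range (k+2), ((k+1+i).choose (2*i) : ℝ) * (t-2)^i := by
  intro k
  induction k using Nat.twoStepInduction with
  | zero => simp [chebU, Finset.sum_range_succ]; ring
  | one =>
    show chebU 2 t 1 - chebU 1 t 1 = _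
    rw [show chebU 2 t 1 = t * chebU 1 t 1 - 1 * chebU 0 t 1 from rfl]
    simp [chebU, Finset.sum_range_succ]
    ring
  | more n ih1 ih2 =>
    rw [sumrec (t-2) (n+1), ← ih1, ← ih2]
    have r3 : chebU (n+3) t 1 = t * chebU (n+2) t 1 - 1 * chebU (n+1) t 1 := rfl
    have r2 : chebU (n+2) t 1 = t * chebU (n+1) t 1 - 1 * chebU n t 1 := rfl
    show chebU (n+3) t 1 - chebU (n+2) t 1 = _
    rw [r3, r2]
    ring

theorem chebU_sub_sqrt_mul_eq_taylor_sum (k : ℕ) (hk : 1 ≤ k) (x y : ℝ) (hy : 0 < y) :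
    chebU k x y - Real.sqrt y * chebU (k - 1) x y =
      (Real.sqrt y) ^ k *
        ∑ i ∈ Finset.range (k + 1),
          (Nat.choose (k + i) (2 * i) : ℝ) * (x / Real.sqrt y - 2) ^ i := by
  obtain ⟨m, rfl⟩ : ∃ m, k = m + 1 := ⟨k - 1, by omega⟩
  simp only [Nat.add_sub_cancel]
  rw [chebU_scale x y hy (m+1), chebU_scale x y hy m]
  have hpow : Real.sqrt y * (Real.sqrt y)^m = (Real.sqrt y)^(m+1) := by rw [pow_succ]; ring
  have hone := onevar (x / Real.sqrt y) m
  linear_combination (Real.sqrt y)^(m+1) * hone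
    + chebU m (x / Real.sqrt y) 1 * hpow
end

section
/- For every integer k ≥ 0 and every integer i ≥ 0, the i-th derivative of the polynomial function x ↦ U_k(x, 1) evaluated at x = 2 equals i!·C(k + i + 1, 2i + 1), where C(n, m) denotes the binomial coefficient. -/
open Polynomial

/-- Polynomial version of `chebU · x 1`. -/
noncomputable def chebP : ℕ → ℝ[X]
  | 0 => 1
  | 1 => X
  | (k + 2) => X * chebP (k + 1) - chebP k

lemma chebU_eq_eval : ∀ k x, chebU k x 1 = (chebP k).eval x
  | 0, x => by simp [chebU, chebP]
  | 1, x => by simp [chebU, chebP]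
  | (k + 2), x => by
    simp [chebU, chebP, chebU_eq_eval (k + 1) x, chebU_eq_eval k x]

lemma iteratedDeriv_eval (p : ℝ[X]) (i : ℕ) :
    iteratedDeriv i (fun x : ℝ => p.eval x) =
      fun x => (derivative^[i] p).eval x := by
  induction i generalizing p with
  | zero => simp
  | succ n ih =>
    rw [iteratedDeriv_succ']
    have : (deriv fun x : ℝ => p.eval x) = fun x => p.derivative.eval x := by
      funext x; exact Polynomial.deriv p
    rw [this, ih, Function.iterate_succ_apply]

lemma iterate_derivative_X_mul (i : ℕ) (q : ℝ[X]) :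
    derivative^[i] (X * q) =
      X * derivative^[i] q + i • derivative^[i - 1] q := by
  induction i generalizing q with
  | zero => simp
  | succ n ih =>
    rw [Function.iterate_succ_apply', ih]
    cases n with
    | zero => simp [mul_comm]
    | succ m =>
      simp only [derivative_add, derivative_mul, derivative_X, one_mul,
        derivative_smul, Nat.succ_sub_one, Nat.add_sub_cancel]
      rw [Function.iterate_succ_apply' derivative (m + 1) q,
        Function.iterate_succ_apply' derivative m q]
      simp only [nsmul_eq_mul]
      push_cast
      ring

lemma choose_pascal_id (m j : ℕ) :
    Nat.choose (m+2) (j+2) + Nat.choose m (j+2) = 2 * Nat.choose (m+1) (j+2) + Nat.choose m j := by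
  rw [show m+2 = m+1+1 by rfl, show j+2 = j+1+1 by rfl, Nat.choose_succ_succ (m+1) (j+1),
    Nat.choose_succ_succ m j, Nat.choose_succ_succ m (j+1)]
  ring

lemma key : ∀ k : ℕ, ∀ i : ℕ,
    (derivative^[i] (chebP k)).eval 2 =
      (Nat.factorial i : ℝ) * (Nat.choose (k + i + 1) (2 * i + 1) : ℝ)
  | 0, i => by
    cases i with
    | zero => simp [chebP]
    | succ n =>
      have h0 : derivative^[n + 1] (chebP 0) = 0 := by
        rw [Function.iterate_succ_apply]
        simp [chebP, Polynomial.iterate_derivative_zero]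
      rw [h0]
      simp only [eval_zero]
      symm
      rw [mul_eq_zero]
      right
      norm_cast
      exact Nat.choose_eq_zero_of_lt (by omega)
  | 1, i => by
    match i with
    | 0 => simp [chebP]
    | 1 => simp [chebP]
    | (n + 2) =>
      have h0 : derivative^[n + 2] (chebP 1) = 0 := by
        rw [Function.iterate_succ_apply, Function.iterate_succ_apply]
        simp [chebP, Polynomial.iterate_derivative_zero]
      rw [h0]
      simp only [eval_zero]
      symm
      rw [mul_eq_zero]
      right
      norm_cast
      exact Nat.choose_eq_zero_of_lt (by omega)
  | (k + 2), i => by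
    have hX := iterate_derivative_X_mul i (chebP (k + 1))
    have expand : derivative^[i] (chebP (k + 2)) =
        X * derivative^[i] (chebP (k + 1)) + i • derivative^[i - 1] (chebP (k + 1))
          - derivative^[i] (chebP k) := by
      show derivative^[i] (X * chebP (k + 1) - chebP k) = _
      rw [Polynomial.iterate_derivative_sub, hX]
    rw [expand]
    simp only [eval_sub, eval_add, eval_mul, eval_X, eval_smul, smul_eq_mul]
    rw [key (k + 1) i, key k i]
    cases i with
    | zero =>
      simp [Nat.choose_one_right]
      ring
    | succ n =>
      simp only [Nat.add_sub_cancel, nsmul_eq_mul]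
      rw [key (k + 1) n]
      -- reduce to a natural-number binomial identity
      have hnat : Nat.choose (k + 2 + (n + 1) + 1) (2 * (n + 1) + 1)
            + Nat.choose (k + (n + 1) + 1) (2 * (n + 1) + 1)
          = 2 * Nat.choose (k + 1 + (n + 1) + 1) (2 * (n + 1) + 1)
            + Nat.choose (k + 1 + n + 1) (2 * n + 1) := by
        have e1 : k + 2 + (n + 1) + 1 = (k + n + 2) + 2 := by omega
        have e2 : k + (n + 1) + 1 = k + n + 2 := by omega
        have e3 : k + 1 + (n + 1) + 1 = (k + n + 2) + 1 := by omega
        have e4 : k + 1 + n + 1 = k + n + 2 := by omega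
        have e5 : 2 * (n + 1) + 1 = (2 * n + 1) + 2 := by omega
        rw [e1, e2, e3, e4, e5]
        exact choose_pascal_id (k + n + 2) (2 * n + 1)
      have hfact : (Nat.factorial (n + 1) : ℝ) = (n + 1) * Nat.factorial n := by
        push_cast [Nat.factorial_succ]; ring
      have := congrArg (fun m : ℕ => (m : ℝ)) hnat
      push_cast at this
      rw [hfact]
      push_cast
      nlinarith [this, Nat.factorial_pos n]

theorem iteratedDeriv_chebU_at_two (k i : ℕ) :
    iteratedDeriv i (fun x : ℝ => chebU k x 1) 2 =
      (Nat.factorial i : ℝ) * (Nat.choose (k + i + 1) (2 * i + 1) : ℝ) := by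
  have : (fun x : ℝ => chebU k x 1) = fun x => (chebP k).eval x := by
    funext x; exact chebU_eq_eval k x
  rw [this, iteratedDeriv_eval]
  exact key k i
end

section
/- For every integer k ≥ 1 and all real x, y with y > 0, 4y − x² < 0, x ≥ 0, |y| < 1 and |x| < y + 1 (the region Ω₂ with y > 0), one has (√y)^k·((k + 1)(1 − √y) + √y) ≤ U_k(x, y) − y·U_{k−1}(x, y) ≤ 1. -/
lemma chebU_aux1 (x g : ℝ) (hg0 : 0 ≤ g) (hx : 2 * g ≤ x) :
    ∀ k : ℕ, 0 ≤ chebU k x (g ^ 2) ∧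
      g ^ (k + 1) ≤ chebU (k + 1) x (g ^ 2) - g * chebU k x (g ^ 2) := by
  intro k
  induction k with
  | zero =>
    refine ⟨by simp [chebU], ?_⟩
    show g ^ 1 ≤ x - g * 1
    nlinarith
  | succ n ih =>
    obtain ⟨h0, h1⟩ := ih
    have hU : 0 ≤ chebU (n + 1) x (g ^ 2) := by
      nlinarith [pow_nonneg hg0 (n + 1)]
    refine ⟨hU, ?_⟩
    have hrec : chebU (n + 2) x (g ^ 2)
        = x * chebU (n + 1) x (g ^ 2) - g ^ 2 * chebU n x (g ^ 2) := rfl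
    rw [hrec]
    have h2 : g * g ^ (n + 1) ≤ g * (chebU (n + 1) x (g ^ 2) - g * chebU n x (g ^ 2)) :=
      mul_le_mul_of_nonneg_left h1 hg0
    have h3 : 0 ≤ (x - 2 * g) * chebU (n + 1) x (g ^ 2) :=
      mul_nonneg (by linarith) hU
    have hpow : g ^ (n + 2) = g * g ^ (n + 1) := by ring
    nlinarith

lemma chebU_aux2 (x g : ℝ) (hg0 : 0 ≤ g) (hg1 : g < 1) (hx : 2 * g ≤ x)
    (hx1 : x ≤ g ^ 2 + 1) :
    ∀ k : ℕ, g ^ (k + 1) * (((k : ℝ) + 2) * (1 - g) + g)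
        ≤ chebU (k + 1) x (g ^ 2) - g ^ 2 * chebU k x (g ^ 2) ∧
      chebU (k + 1) x (g ^ 2) - g ^ 2 * chebU k x (g ^ 2) ≤ x - g ^ 2 := by
  intro k
  induction k with
  | zero =>
    have e1 : chebU 1 x (g ^ 2) = x := rfl
    have e0 : chebU 0 x (g ^ 2) = 1 := rfl
    rw [e1, e0]
    push_cast
    constructor <;> nlinarith
  | succ n ih =>
    obtain ⟨hlo, hhi⟩ := ih
    obtain ⟨hU0, hW⟩ := chebU_aux1 x g hg0 hx n
    have hU1 : 0 ≤ chebU (n + 1) x (g ^ 2) := (chebU_aux1 x g hg0 hx (n + 1)).1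
    have hrec : chebU (n + 2) x (g ^ 2)
        = x * chebU (n + 1) x (g ^ 2) - g ^ 2 * chebU n x (g ^ 2) := rfl
    constructor
    · rw [hrec]
      push_cast
      have key : x * chebU (n + 1) x (g ^ 2) - g ^ 2 * chebU n x (g ^ 2)
            - g ^ 2 * chebU (n + 1) x (g ^ 2)
          = (x - 2 * g) * chebU (n + 1) x (g ^ 2)
            + g * (1 - g) * (chebU (n + 1) x (g ^ 2) - g * chebU n x (g ^ 2))
            + g * (chebU (n + 1) x (g ^ 2) - g ^ 2 * chebU n x (g ^ 2)) := by
        ring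
      have h3 : 0 ≤ (x - 2 * g) * chebU (n + 1) x (g ^ 2) :=
        mul_nonneg (by linarith) hU1
      have h4 : g * (1 - g) * g ^ (n + 1)
          ≤ g * (1 - g) * (chebU (n + 1) x (g ^ 2) - g * chebU n x (g ^ 2)) :=
        mul_le_mul_of_nonneg_left hW (by nlinarith)
      have h5 : g * (g ^ (n + 1) * (((n : ℝ) + 2) * (1 - g) + g))
          ≤ g * (chebU (n + 1) x (g ^ 2) - g ^ 2 * chebU n x (g ^ 2)) :=
        mul_le_mul_of_nonneg_left hlo hg0
      have hgoal : g ^ (n + 1 + 1) * (((n : ℝ) + 1 + 2) * (1 - g) + g)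
          = g * (1 - g) * g ^ (n + 1)
            + g * (g ^ (n + 1) * (((n : ℝ) + 2) * (1 - g) + g)) := by
        ring
      rw [hgoal]
      linarith
    · rw [hrec]
      have h6 : (x - g ^ 2 - 1) * chebU (n + 1) x (g ^ 2) ≤ 0 :=
        mul_nonpos_of_nonpos_of_nonneg (by linarith) hU1
      nlinarith

theorem chebU_sub_y_mul_bounds_Omega2_pos (k : ℕ) (hk : 1 ≤ k) (x y : ℝ)
    (hy : 0 < y) (h1 : 4 * y - x ^ 2 < 0) (h2 : 0 ≤ x) (h3 : |y| < 1) (h4 : |x| < y + 1) :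
    (Real.sqrt y) ^ k * ((k + 1 : ℝ) * (1 - Real.sqrt y) + Real.sqrt y) ≤
        chebU k x y - y * chebU (k - 1) x y ∧
      chebU k x y - y * chebU (k - 1) x y ≤ 1 := by
  obtain ⟨m, rfl⟩ : ∃ m, k = m + 1 := ⟨k - 1, (Nat.succ_pred_eq_of_pos hk).symm⟩
  set g := Real.sqrt y with hg
  have hg0 : 0 ≤ g := Real.sqrt_nonneg y
  have hgy : g ^ 2 = y := Real.sq_sqrt hy.le
  have hy1 : y < 1 := lt_of_abs_lt h3
  have hg1 : g < 1 := by
    rw [hg, show (1 : ℝ) = Real.sqrt 1 by simp]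
    exact Real.sqrt_lt_sqrt hy.le hy1
  have hx4 : x < y + 1 := lt_of_abs_lt h4
  have hx : 2 * g ≤ x := by nlinarith
  have hx1 : x ≤ g ^ 2 + 1 := by rw [hgy]; linarith
  obtain ⟨hlo, hhi⟩ := chebU_aux2 x g hg0 hg1 hx hx1 m
  rw [hgy] at hlo hhi
  simp only [Nat.add_sub_cancel]
  constructor
  · refine le_trans (le_of_eq ?_) hlo
    push_cast
    ring
  · linarith
end

section
/- For every integer k ≥ 1 and all real x, y with y ≤ 0, 4y − x² < 0, x ≥ 0, |y| < 1 and |x| < y + 1 (the region Ω₂ with y ≤ 0), one has 0 ≤ U_k(x, y) − y·U_{k−1}(x, y) ≤ 1. -/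
lemma chebU_nonneg (x y : ℝ) (hy : y ≤ 0) (hx : 0 ≤ x) : ∀ k, 0 ≤ chebU k x y := by
  intro k
  induction k using Nat.strong_induction_on with
  | _ k ih =>
    match k with
    | 0 => simp [chebU]
    | 1 => simpa [chebU]
    | (n+2) =>
      have h1 := ih (n+1) (by omega)
      have h2 := ih n (by omega)
      simp only [chebU]
      nlinarith

lemma chebU_V_le (x y : ℝ) (hy : y ≤ 0) (hx : 0 ≤ x) (hxy : x < y + 1) :
    ∀ n, chebU (n+1) x y - y * chebU n x y ≤ x - y := by
  intro n
  induction n with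
  | zero => simp [chebU]
  | succ n ih =>
    have hU := chebU_nonneg x y hy hx (n+1)
    have : chebU (n+2) x y - y * chebU (n+1) x y
        = (chebU (n+1) x y - y * chebU n x y) + (x - y - 1) * chebU (n+1) x y := by
      simp only [chebU]; ring
    nlinarith

theorem chebU_sub_y_mul_bounds_Omega2_nonpos (k : ℕ) (hk : 1 ≤ k) (x y : ℝ)
    (hy : y ≤ 0) (h1 : 4 * y - x ^ 2 < 0) (h2 : 0 ≤ x) (h3 : |y| < 1) (h4 : |x| < y + 1) :
    0 ≤ chebU k x y - y * chebU (k - 1) x y ∧ chebU k x y - y * chebU (k - 1) x y ≤ 1 := by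
  obtain ⟨n, rfl⟩ : ∃ n, k = n + 1 := ⟨k - 1, by omega⟩
  have hxy : x < y + 1 := by rwa [abs_of_nonneg h2] at h4
  have hU1 := chebU_nonneg x y hy h2 (n+1)
  have hU0 := chebU_nonneg x y hy h2 n
  have hle := chebU_V_le x y hy h2 hxy n
  simp only [Nat.add_sub_cancel]
  constructor
  · nlinarith
  · linarith
end

section
/- For every integer k ≥ 1 and all real x, y with x ≥ 0, |y| < 1 and |x| < y + 1 (the region Δ⁺), one has |U_k(x, y) − y·U_{k−1}(x, y)| ≤ √2. -/
set_option maxHeartbeats 1000000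

/-- The difference sequence `V_k = U_k - y U_{k-1}`, with `V_0 = 1`. -/
noncomputable def chebV (x y : ℝ) : ℕ → ℝ
  | 0 => 1
  | 1 => x - y
  | (k + 2) => x * chebV x y (k + 1) - y * chebV x y k

lemma chebV_eq (x y : ℝ) : ∀ k, chebV x y (k + 1) = chebU (k + 1) x y - y * chebU k x y := by
  have H : ∀ k, chebV x y (k + 1) = chebU (k + 1) x y - y * chebU k x y ∧
      chebV x y (k + 2) = chebU (k + 2) x y - y * chebU (k + 1) x y := by
    intro k
    induction k with
    | zero => exact ⟨by simp [chebV, chebU], by simp [chebV, chebU]; ring⟩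
    | succ n ih =>
      refine ⟨ih.2, ?_⟩
      show x * chebV x y (n + 2) - y * chebV x y (n + 1) = _
      rw [ih.1, ih.2]
      show _ = (x * chebU (n + 2) x y - y * chebU (n + 1) x y) - y * (x * chebU (n+1) x y - y * chebU n x y)
      ring
  exact fun k => (H k).1

/-- Closed form for the linear recurrence in terms of the two roots. -/
lemma closed_form {R : Type*} [CommRing R] (l m : R) (v : ℕ → R)
    (h0 : v 0 = 1) (h1 : v 1 = (l + m) - l * m)
    (hrec : ∀ k, v (k + 2) = (l + m) * v (k + 1) - (l * m) * v k) :
    ∀ k, (l - m) * v k = (1 - m) * l ^ (k + 1) - (1 - l) * m ^ (k + 1) := by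
  have H : ∀ k, (l - m) * v k = (1 - m) * l ^ (k + 1) - (1 - l) * m ^ (k + 1) ∧
      (l - m) * v (k+1) = (1 - m) * l ^ (k + 2) - (1 - l) * m ^ (k + 2) := by
    intro k
    induction k with
    | zero => rw [h0, h1]; constructor <;> ring
    | succ n ih =>
      refine ⟨ih.2, ?_⟩
      rw [hrec n]
      linear_combination (l + m) * ih.2 + (- (l * m)) * ih.1
  exact fun k => (H k).1

lemma aux_geom (r : ℝ) (h0 : 0 ≤ r) (h1 : r ≤ 1) :
    ∀ k : ℕ, (k : ℝ) * (1 - r) * r ^ k ≤ 1 - r ^ k := by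
  intro k
  induction k with
  | zero => simp
  | succ n ih =>
    have hr : r ^ (n+1) ≤ 1 := pow_le_one₀ h0 h1
    calc ((n:ℕ).succ : ℝ) * (1 - r) * r ^ (n+1)
        = ((n:ℝ)*(1-r)*r^n)*r + (1-r)*r^(n+1) := by push_cast; ring
      _ ≤ (1 - r^n)*r + (1-r)*r^(n+1) :=
          add_le_add_left (mul_le_mul_of_nonneg_right ih h0) _
      _ = r - r*r^(n+1) := by rw [pow_succ]; ring
      _ ≤ 1 - r^(n+1) := by nlinarith [mul_nonneg (sub_nonneg.2 h1) (sub_nonneg.2 hr)]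

lemma aux2 (r : ℝ) (h0 : 0 ≤ r) (h1 : r ≤ 1) :
    ∀ k : ℕ, ((k : ℝ) + 1) * ((1 - r ^ 2) / 2) * r ^ k + r ^ (k + 1) ≤ 1 := by
  intro k
  induction k with
  | zero => simp; nlinarith [sq_nonneg (1 - r)]
  | succ n ih =>
    have h2 : (((n:ℝ)) + 1) * ((1 - r ^ 2) / 2) * r ^ (n+1) + r ^ (n + 2) ≤ r := by
      calc (((n:ℝ)) + 1) * ((1 - r ^ 2) / 2) * r ^ (n+1) + r ^ (n + 2)
          = ((((n:ℝ)) + 1) * ((1 - r ^ 2) / 2) * r ^ n + r ^ (n+1)) * r := by ring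
        _ ≤ 1 * r := mul_le_mul_of_nonneg_right ih h0
        _ = r := one_mul r
    have hp : r ^ (n+1) ≤ 1 := pow_le_one₀ h0 h1
    have hr2 : 0 ≤ (1 - r^2)/2 := by nlinarith
    have h3 : ((1 - r^2)/2) * r^(n+1) ≤ (1 - r^2)/2 := mul_le_of_le_one_right hr2 hp
    calc (((n:ℕ).succ : ℝ) + 1) * ((1 - r ^ 2) / 2) * r ^ (n+1) + r ^ (n + 2)
        = ((((n:ℝ)) + 1) * ((1 - r ^ 2) / 2) * r ^ (n+1) + r ^ (n + 2)) + ((1 - r^2)/2) * r^(n+1) := by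
          push_cast; ring
      _ ≤ r + (1 - r^2)/2 := add_le_add h2 h3
      _ ≤ 1 := by nlinarith [sq_nonneg (1 - r)]

/-- Bound for the two-real-roots combination. -/
lemma dist_bound (l m : ℝ) (hml : m ≤ l) (hm1 : -1 < m) (hl1 : l < 1) (hl0 : 0 ≤ l) (k : ℕ) :
    |(1 - m) * l ^ (k + 1) - (1 - l) * m ^ (k + 1)| ≤ l - m := by
  rw [abs_le]
  have hlk : (0:ℝ) ≤ l ^ (k+1) := pow_nonneg hl0 _
  rcases le_or_gt 0 m with hm0 | hm0
  · have hpow : m ^ (k+1) ≤ l ^ (k+1) := pow_le_pow_left₀ hm0 hml _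
    have hmk : (0:ℝ) ≤ m ^ (k+1) := pow_nonneg hm0 _
    constructor
    · have h1 : (1 - l) * m ^ (k+1) ≤ (1 - m) * l ^ (k+1) :=
        mul_le_mul (by linarith) hpow hmk (by linarith)
      linarith
    · have el : (1 - l) * ∑ i ∈ Finset.range (k+1), l ^ i = 1 - l ^ (k+1) := by
        have := geom_sum_mul l (k+1); linear_combination -this
      have em : (1 - m) * ∑ i ∈ Finset.range (k+1), m ^ i = 1 - m ^ (k+1) := by
        have := geom_sum_mul m (k+1); linear_combination -this
      have hS : ∑ i ∈ Finset.range (k+1), m ^ i ≤ ∑ i ∈ Finset.range (k+1), l ^ i :=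
        Finset.sum_le_sum fun i _ => pow_le_pow_left₀ hm0 hml i
      have hid : (l - m) - ((1 - m) * l ^ (k+1) - (1 - l) * m ^ (k+1)) =
          (1 - l) * (1 - m) * ((∑ i ∈ Finset.range (k+1), l ^ i) - ∑ i ∈ Finset.range (k+1), m ^ i) := by
        linear_combination (-(1 - m)) * el + (1 - l) * em
      have hpos : (0:ℝ) ≤ (1 - l) * (1 - m) *
          ((∑ i ∈ Finset.range (k+1), l ^ i) - ∑ i ∈ Finset.range (k+1), m ^ i) :=
        mul_nonneg (mul_nonneg (by linarith) (by linarith)) (by linarith)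
      linarith
  · set ν := -m with hν
    have hν0 : 0 < ν := by rw [hν]; linarith
    have hν1 : ν < 1 := by rw [hν]; linarith
    have habs : |m ^ (k+1)| = ν ^ (k+1) := by rw [abs_pow, abs_of_neg hm0]
    have hmlow : -(ν ^ (k+1)) ≤ m ^ (k+1) := by
      have := neg_abs_le (m ^ (k+1)); rw [habs] at this; exact this
    have hmhigh : m ^ (k+1) ≤ ν ^ (k+1) := by
      have := le_abs_self (m ^ (k+1)); rw [habs] at this; exact this
    have hsum : l - m = l + ν := by rw [hν]; ring
    have hνk1 : ν ^ (k + 1) ≤ ν := pow_le_of_le_one hν0.le hν1.le (Nat.succ_ne_zero k)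
    have hm' : (1:ℝ) - m = 1 + ν := by rw [hν]; ring
    constructor
    · have h1 : 0 ≤ (1 - m) * l ^ (k+1) := mul_nonneg (by linarith) hlk
      have h2 : (1 - l) * m ^ (k+1) ≤ (1 - l) * ν ^ (k+1) :=
        mul_le_mul_of_nonneg_left hmhigh (by linarith)
      have h3 : (1 - l) * ν ^ (k+1) ≤ ν ^ (k+1) := by
        nlinarith [pow_nonneg hν0.le (k+1)]
      linarith
    · have lk : l ^ k ≤ 1 := pow_le_one₀ hl0 hl1.le
      have nk : ν ^ k ≤ 1 := pow_le_one₀ hν0.le hν1.le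
      have lk0 : (0:ℝ) ≤ l ^ k := pow_nonneg hl0 k
      have nk0 : (0:ℝ) ≤ ν ^ k := pow_nonneg hν0.le k
      have e1 : l ^ (k+1) = l * l ^ k := by rw [pow_succ]; ring
      have e2 : ν ^ (k+1) = ν * ν ^ k := by rw [pow_succ]; ring
      have hu : (1 + ν) * l ^ (k+1) + (1 - l) * ν ^ (k+1) ≤ l + ν := by
        rw [e1, e2]
        nlinarith [mul_nonneg (mul_nonneg (by linarith : (0:ℝ) ≤ 1 + ν) hl0) (by linarith : (0:ℝ) ≤ 1 - l ^ k),
          mul_nonneg (mul_nonneg hν0.le (by linarith : (0:ℝ) ≤ 1 - l)) (by linarith : (0:ℝ) ≤ 1 - ν ^ k)]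
      have h2 : -((1 - l) * m ^ (k+1)) ≤ (1 - l) * ν ^ (k+1) := by
        nlinarith [hmlow, (by linarith : (0:ℝ) ≤ 1 - l)]
      rw [hsum, hm']
      linarith

lemma real_case (x y : ℝ) (hx : 0 ≤ x) (hy1 : -1 < y) (hy2 : y < 1) (hxy : x < y + 1)
    (hD : 4 * y ≤ x ^ 2) : ∀ k, |chebV x y k| ≤ 1 := by
  intro k
  have hx2 : x < 2 := by linarith
  obtain ⟨d, hd0, hd2⟩ : ∃ d : ℝ, 0 ≤ d ∧ d ^ 2 = x ^ 2 - 4 * y :=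
    ⟨Real.sqrt (x ^ 2 - 4 * y), Real.sqrt_nonneg _, Real.sq_sqrt (by linarith)⟩
  obtain ⟨l, m, hlm, hmul, hsub⟩ : ∃ l m : ℝ, l + m = x ∧ l * m = y ∧ l - m = d :=
    ⟨(x + d) / 2, (x - d) / 2, by ring, by nlinarith [hd2], by ring⟩
  have hl1 : l < 1 := by nlinarith [hd2, hd0]
  have hm1 : -1 < m := by nlinarith [hd2, hd0]
  have hml : m ≤ l := by linarith
  have hl0 : 0 ≤ l := by nlinarith
  have key := closed_form l m (chebV x y) rfl (by show x - y = _; rw [hlm, hmul]) (by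
    intro j
    show x * chebV x y (j+1) - y * chebV x y j = _
    rw [hlm, hmul])
  rcases eq_or_lt_of_le hd0 with hd | hd
  · -- degenerate case: double root r = x/2
    have hlm' : l = m := by nlinarith [hsub]
    set r := l with hr
    have hy' : y = r ^ 2 := by rw [← hmul, ← hlm']; ring
    have hx' : x = 2 * r := by rw [← hlm, ← hlm']; ring
    have hr0 : 0 ≤ r := hl0
    have hr1 : r < 1 := hl1
    have hV : ∀ j, chebV x y j = (1 + (j : ℝ) * (1 - r)) * r ^ j := by
      have H : ∀ j, chebV x y j = (1 + (j : ℝ) * (1 - r)) * r ^ j ∧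
          chebV x y (j+1) = (1 + ((j : ℝ) + 1) * (1 - r)) * r ^ (j+1) := by
        intro j
        induction j with
        | zero =>
          refine ⟨by simp [chebV], ?_⟩
          show x - y = _
          rw [hx', hy']; ring
        | succ n ih =>
          refine ⟨by rw [ih.2]; push_cast; ring, ?_⟩
          show x * chebV x y (n+1) - y * chebV x y n = _
          rw [ih.1, ih.2, hx', hy']
          push_cast; ring
      exact fun j => (H j).1
    rw [hV k]
    have hknn : (0:ℝ) ≤ (k : ℝ) := Nat.cast_nonneg k
    have h1 : (0:ℝ) ≤ (1 + (k : ℝ) * (1 - r)) * r ^ k := by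
      apply mul_nonneg _ (pow_nonneg hr0 k)
      nlinarith
    have h2 : (1 + (k : ℝ) * (1 - r)) * r ^ k ≤ 1 := by
      have := aux_geom r hr0 hr1.le k
      have hrk : (0:ℝ) ≤ r ^ k := pow_nonneg hr0 k
      nlinarith
    rw [abs_of_nonneg h1]; exact h2
  · have hkey := key k
    rw [hsub] at hkey
    have hbound := dist_bound l m hml hm1 hl1 hl0 k
    rw [← hkey, hsub, abs_mul, abs_of_pos hd] at hbound
    have : d * |chebV x y k| ≤ d * 1 := by linarith
    exact le_of_mul_le_mul_left this hd

lemma complex_case (x y : ℝ) (hx : 0 ≤ x) (hy2 : y < 1) (hxy : x < y + 1)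
    (hD : x ^ 2 < 4 * y) : ∀ k, |chebV x y (k + 1)| ≤ Real.sqrt 2 := by
  have hy0 : 0 < y := by nlinarith [sq_nonneg x]
  set p := x / 2 with hp
  have hp0 : 0 ≤ p := by rw [hp]; linarith
  obtain ⟨q, hq0, hq2⟩ : ∃ q : ℝ, 0 < q ∧ q ^ 2 = y - p ^ 2 := by
    refine ⟨Real.sqrt (y - p ^ 2), Real.sqrt_pos.2 (by rw [hp]; nlinarith), Real.sq_sqrt (by rw [hp]; nlinarith)⟩
  have hpq : p ^ 2 + q ^ 2 = y := by linarith
  set l : ℂ := ⟨p, q⟩ with hldef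
  set m : ℂ := ⟨p, -q⟩ with hmdef
  have e1 : l.re = p := rfl
  have e2 : l.im = q := rfl
  have e3 : m.re = p := rfl
  have e4 : m.im = -q := rfl
  have hlm : l + m = (x : ℂ) := by
    apply Complex.ext
    · simp only [Complex.add_re, e1, e3, Complex.ofReal_re, hp]; ring
    · simp only [Complex.add_im, e2, e4, Complex.ofReal_im]; ring
  have hmul : l * m = (y : ℂ) := by
    apply Complex.ext
    · simp only [Complex.mul_re, e1, e2, e3, e4, Complex.ofReal_re]; nlinarith
    · simp only [Complex.mul_im, e1, e2, e3, e4, Complex.ofReal_im]; ring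
  have hm_conj : m = (starRingEnd ℂ) l := by
    apply Complex.ext <;> simp [Complex.conj_re, Complex.conj_im, e1, e2, e3, e4]
  have key := closed_form l m (fun n => ((chebV x y n : ℝ) : ℂ))
    (by norm_num [chebV])
    (by show ((x - y : ℝ) : ℂ) = _; rw [hlm, hmul]; push_cast; ring)
    (by
      intro j
      show ((x * chebV x y (j + 1) - y * chebV x y j : ℝ) : ℂ) = _
      rw [hlm, hmul]; push_cast; ring)
  have hz : ∀ j : ℕ, ((1 : ℂ) - l) * m ^ (j + 1) = (starRingEnd ℂ) ((1 - m) * l ^ (j + 1)) := by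
    intro j
    rw [map_mul, map_sub, map_one, map_pow, hm_conj, Complex.conj_conj]
  have master : ∀ j, q * chebV x y j = (l ^ j).im * (p - y) + (l ^ j).re * q := by
    intro j
    have hk := key j
    rw [hz j] at hk
    have h2 := congrArg Complex.im hk
    simp only [Complex.mul_im, Complex.mul_re, Complex.sub_im, Complex.sub_re,
      Complex.one_im, Complex.one_re, Complex.ofReal_im, Complex.ofReal_re,
      Complex.conj_im, Complex.conj_re, pow_succ, e1, e2, e3, e4] at h2
    linear_combination h2 / 2 - (l ^ j).im * hpq
  -- basic facts about r = sqrt y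
  obtain ⟨r, hr0, hr2⟩ : ∃ r : ℝ, 0 ≤ r ∧ r ^ 2 = y :=
    ⟨Real.sqrt y, Real.sqrt_nonneg _, Real.sq_sqrt hy0.le⟩
  have hr1 : r < 1 := by nlinarith
  have hpr : p ≤ r := by nlinarith
  have hnormsq : ∀ j, (l ^ j).re ^ 2 + (l ^ j).im ^ 2 = y ^ j := by
    intro j
    have h1 : Complex.normSq (l ^ j) = (Complex.normSq l) ^ j := map_pow Complex.normSq l j
    have h2 : Complex.normSq l = y := by
      rw [Complex.normSq_apply, e1, e2]; nlinarith
    rw [Complex.normSq_apply, h2] at h1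
    nlinarith [h1]
  have hA : ∀ j, |(l ^ j).re| ≤ r ^ j := by
    intro j
    have h1 : (l ^ j).re ^ 2 ≤ (r ^ j) ^ 2 := by
      have := hnormsq j
      have h3 : (r ^ j) ^ 2 = y ^ j := by rw [← hr2]; ring
      nlinarith [sq_nonneg (l ^ j).im]
    have := Real.sqrt_le_sqrt h1
    rwa [Real.sqrt_sq_eq_abs, Real.sqrt_sq (pow_nonneg hr0 j)] at this
  have hB : ∀ j : ℕ, |(l ^ (j + 1)).im| ≤ ((j : ℝ) + 1) * q * r ^ j := by
    intro j
    induction j with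
    | zero => simp [pow_one, e2, abs_of_pos hq0]
    | succ n ih =>
      have h1 : (l ^ (n + 2)).im = (l ^ (n + 1)).re * q + (l ^ (n + 1)).im * p := by
        rw [pow_succ, Complex.mul_im, e1, e2]
      rw [h1]
      calc |(l ^ (n + 1)).re * q + (l ^ (n + 1)).im * p|
          ≤ |(l ^ (n + 1)).re| * q + |(l ^ (n + 1)).im| * p := by
            refine (abs_add_le _ _).trans ?_
            rw [abs_mul, abs_mul, abs_of_pos hq0, abs_of_nonneg hp0]
        _ ≤ r ^ (n + 1) * q + (((n : ℝ) + 1) * q * r ^ n) * p := by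
            have t1 := mul_le_mul_of_nonneg_right (hA (n + 1)) hq0.le
            have t2 := mul_le_mul_of_nonneg_right (ih) hp0
            linarith
        _ ≤ r ^ (n + 1) * q + (((n : ℝ) + 1) * q * r ^ n) * r := by
            have hnn : (0:ℝ) ≤ ((n : ℝ) + 1) * q * r ^ n :=
              mul_nonneg (mul_nonneg (by positivity) hq0.le) (pow_nonneg hr0 n)
            exact add_le_add_right (mul_le_mul_of_nonneg_left hpr hnn) _
        _ = ((n : ℝ) + 1 + 1) * q * r ^ (n + 1) := by push_cast; ring
        _ = (((n + 1 : ℕ) : ℝ) + 1) * q * r ^ (n + 1) := by push_cast; ring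
  -- main bound
  intro n
  have hM := master (n + 1)
  set A := (l ^ (n + 1)).re with hAd
  set B := (l ^ (n + 1)).im with hBd
  rcases le_or_gt y p with hcase | hcase
  · -- subcase x ≥ 2y : |V| ≤ 1
    have hup : |chebV x y (n + 1)| ≤ 1 := by
      have h1 : |q * chebV x y (n + 1)| ≤ |B| * (p - y) + |A| * q := by
        rw [hM]
        refine (abs_add_le _ _).trans ?_
        rw [abs_mul, abs_mul, abs_of_nonneg (by linarith : (0:ℝ) ≤ p - y), abs_of_pos hq0]
      have h2 : |B| * (p - y) ≤ (((n : ℝ) + 1) * q * r ^ n) * (p - y) :=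
        mul_le_mul_of_nonneg_right (hB n) (by linarith)
      have h3 : |A| * q ≤ r ^ (n + 1) * q := mul_le_mul_of_nonneg_right (hA (n + 1)) hq0.le
      have h4 : p - y ≤ (1 - r ^ 2) / 2 := by rw [hp] at *; nlinarith
      have h5 : (((n : ℝ) + 1) * q * r ^ n) * (p - y) ≤ (((n : ℝ) + 1) * q * r ^ n) * ((1 - r ^ 2) / 2) := by
        apply mul_le_mul_of_nonneg_left h4
        exact mul_nonneg (mul_nonneg (by positivity) hq0.le) (pow_nonneg hr0 n)
      have h6 := aux2 r hr0 hr1.le n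
      have h7 : |q * chebV x y (n + 1)| ≤ q * 1 := by
        rw [abs_mul, abs_of_pos hq0] at h1 ⊢
        nlinarith [abs_nonneg (chebV x y (n + 1)), mul_le_mul_of_nonneg_left h6 hq0.le]
      rw [abs_mul, abs_of_pos hq0] at h7
      exact le_of_mul_le_mul_left h7 hq0
    have : (1:ℝ) ≤ Real.sqrt 2 := by
      rw [show (1:ℝ) = Real.sqrt 1 by simp]
      exact Real.sqrt_le_sqrt (by norm_num)
    linarith [hup]
  · -- subcase x < 2y : Cauchy-Schwarz
    have hx2y : x < 2 * y := by rw [hp] at hcase; linarith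
    have hAB : A ^ 2 + B ^ 2 = y ^ (n + 1) := hnormsq (n + 1)
    have hCS : (q * chebV x y (n + 1)) ^ 2 ≤ (A ^ 2 + B ^ 2) * ((p - y) ^ 2 + q ^ 2) := by
      rw [hM]
      nlinarith [sq_nonneg (B * q - A * (p - y))]
    have hval : (p - y) ^ 2 + q ^ 2 = y * (1 + y - x) := by rw [hp]; nlinarith
    have hyk : y ^ (n + 1) * y ≤ y ^ 2 := by
      calc y ^ (n + 1) * y = y ^ (n + 2) := by ring
        _ ≤ y ^ 2 := pow_le_pow_of_le_one hy0.le hy2.le (by omega)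
    have h8 : (q * chebV x y (n + 1)) ^ 2 ≤ y ^ 2 * (1 + y - x) := by
      rw [hval, hAB] at hCS
      have h9 : (0:ℝ) < 1 + y - x := by linarith
      nlinarith [hCS]
    have h10 : y ^ 2 * (1 + y - x) ≤ 2 * q ^ 2 := by
      rw [hp] at hq2
      nlinarith [mul_nonneg (mul_nonneg (mul_nonneg (by linarith : (0:ℝ) ≤ 2*y - x) hy0.le) (by linarith : (0:ℝ) ≤ 1 - y)) (by linarith : (0:ℝ) ≤ 2 + y),
        mul_nonneg (mul_nonneg (mul_nonneg hx hy0.le) (by linarith : (0:ℝ) ≤ 1 - y)) (by linarith : (0:ℝ) ≤ 2 - y),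
        mul_nonneg (mul_nonneg hy0.le hx) (by linarith : (0:ℝ) ≤ 2*y - x)]
    have h11 : (chebV x y (n + 1)) ^ 2 ≤ 2 := by
      have hq2pos : (0:ℝ) < q ^ 2 := by positivity
      have : (chebV x y (n + 1)) ^ 2 * q ^ 2 ≤ 2 * q ^ 2 := by nlinarith [h8, h10]
      exact le_of_mul_le_mul_right this hq2pos
    have := Real.sqrt_le_sqrt h11
    rwa [Real.sqrt_sq_eq_abs] at this

theorem abs_chebU_sub_y_mul_le_sqrt_two (k : ℕ) (hk : 1 ≤ k) (x y : ℝ)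
    (h2 : 0 ≤ x) (h3 : |y| < 1) (h4 : |x| < y + 1) :
    |chebU k x y - y * chebU (k - 1) x y| ≤ Real.sqrt 2 := by
  obtain ⟨hy1, hy2⟩ := abs_lt.mp h3
  have hxy : x < y + 1 := by rwa [abs_of_nonneg h2] at h4
  cases k with
  | zero => omega
  | succ m =>
    simp only [Nat.add_sub_cancel]
    rw [← chebV_eq x y m]
    rcases le_or_gt (4 * y) (x ^ 2) with hD | hD
    · have h1 := real_case x y h2 hy1 hy2 hxy hD (m + 1)
      have hs : (1:ℝ) ≤ Real.sqrt 2 := by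
        rw [show (1:ℝ) = Real.sqrt 1 by simp]
        exact Real.sqrt_le_sqrt (by norm_num)
      linarith
    · exact complex_case x y h2 hy2 hxy hD m
end

section
/- Let H be a complex Hilbert space, let L be a bounded self-adjoint linear operator on H with spectrum σ(L) contained in [0, 2], let τ > 0 and a > 0 be real constants with 1 − τa > 0, and set S := (1 + τa)⁻¹·L − ((1 − τa)/(1 + τa))·I. Define operator polynomials U_k(L, S) by U_k(L, S) = L·U_{k−1}(L, S) − S·U_{k−2}(L, S) for k ≥ 1, with U_0(L, S) = I and U_{−1}(L, S) = 0. Then for every integer k ≥ 1, the operator norm satisfies ‖U_k(L, S) − S·U_{k−1}(L, S)‖ ≤ √2. -/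
set_option maxHeartbeats 1000000

open Polynomial

/-- The scalar residual sequence. -/
noncomputable def chebf (x s : ℝ) : ℕ → ℝ
  | 0 => 1
  | 1 => x - s
  | (k+2) => x * chebf x s (k+1) - s * chebf x s k

/-- The residual polynomials `F k = U_k - q·U_{k-1}` (as abstract recursion). -/
noncomputable def chebF (q : ℂ[X]) : ℕ → ℂ[X]
  | 0 => 1
  | 1 => X - q
  | (k+2) => X * chebF q (k+1) - q * chebF q k

lemma factA (x s : ℝ) (h1 : x^2 ≤ 2*s) (h2 : 2*s ≤ x) :
    (2*s + s*x - x^2)^2 ≤ x*(4*s - x^2)*((2-x)*(1+s-x)) := by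
  nlinarith [sq_nonneg (x - 2*s), sq_nonneg (x^2 - 2*s),
    mul_nonneg (sub_nonneg.2 h1) (sub_nonneg.2 h2), sq_nonneg x, sq_nonneg s, sq_nonneg (1-x)]

lemma factB (x s : ℝ) (hx0 : 0 ≤ x) (hx2 : x ≤ 2) (h1 : x^2 ≤ 4*s) (h2 : 2*s ≤ x)
    (h3 : 2*s ≤ x^2) (h4 : x^2 ≤ s*(2+x)) :
    4*s^2*(1+s-x) ≤ 4*s - x^2 := by
  nlinarith [mul_nonneg (sub_nonneg.2 h3) (sub_nonneg.2 h2),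
    mul_nonneg (sub_nonneg.2 h4) (sub_nonneg.2 h2), sq_nonneg (x-1), sq_nonneg (2*s-x),
    mul_nonneg (sub_nonneg.2 h1) (sub_nonneg.2 h3), sq_nonneg (x^2-2*s)]

lemma static_one (x s u v : ℝ) (hx0 : 0 ≤ x) (hx2 : x ≤ 2)
    (hd : x^2 ≤ 4*s) (hsx : 2*s ≤ x)
    (hu1 : -1 ≤ u) (hu2 : u ≤ 1) (hv1 : -1 ≤ v) (hv2 : v ≤ 1)
    (hE : v^2 - x*u*v + s*u^2 ≤ 1 + s - x) :
    x*v - s*u ≤ 1 := by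
  have hs0 : 0 ≤ s := by nlinarith [sq_nonneg x]
  rcases eq_or_lt_of_le hx2 with hx2' | hx2'
  · subst hx2'
    have hs1 : s = 1 := le_antisymm (by linarith) (by nlinarith)
    subst hs1
    have h0 : (v - u)^2 = 0 := le_antisymm (by nlinarith) (sq_nonneg _)
    have h1 : v - u = 0 := by
      have := sq_eq_zero_iff.mp h0
      linarith [this]
    linarith
  have hE0 : 0 ≤ 1 + s - x := by nlinarith [sq_nonneg (x - 2)]
  have hQ : 0 ≤ 1 + s - x - (v^2 - x*u*v + s*u^2) := by linarith
  rcases le_or_gt (2*s + s*x - x^2) 0 with hC | hC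
  · by_contra hcon
    push_neg at hcon
    nlinarith [mul_nonneg hx0 hQ,
      mul_nonneg hx0 (sq_nonneg (2*(1-v) - x*(1-u))),
      mul_nonneg (mul_nonneg hx0 (by linarith : (0:ℝ) ≤ 4*s - x^2)) (sq_nonneg (1-u)),
      mul_nonneg (neg_nonneg.2 hC) (by linarith : (0:ℝ) ≤ 1 - u)]
  have hspos : 0 < s := by nlinarith
  have hxpos : 0 < x := by linarith
  rcases le_or_gt (x^2) (2*s) with h2s | h2s
  · have hA := factA x s h2s hsx
    have hdpos : 0 < 4*s - x^2 := by linarith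
    by_contra hcon
    push_neg at hcon
    nlinarith [mul_nonneg (mul_nonneg hx0 hdpos.le) (mul_nonneg hx0 hQ),
      sq_nonneg ((2*s + s*x - x^2) - (x*(4*s-x^2)/2)*(1-u)),
      mul_nonneg (mul_nonneg (mul_nonneg hx0 hx0) (mul_nonneg hdpos.le hdpos.le)) (sq_nonneg (1-u)),
      mul_nonneg (mul_nonneg hx0 hdpos.le) (mul_nonneg hx0 (sq_nonneg (2*(1-v) - x*(1-u)))),
      mul_pos (mul_pos hxpos hdpos) (by linarith : (0:ℝ) < 2 - x)]
  · have hC4 : x^2 ≤ s*(2+x) := by nlinarith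
    have hB := factB x s hx0 hx2 hd hsx h2s.le hC4
    have hdpos : 0 < 4*s - x^2 := by
      rcases eq_or_lt_of_le (by linarith : x^2 ≤ 4*s) with h | h
      · exfalso; nlinarith
      · linarith
    by_contra hcon
    push_neg at hcon
    have hTsq : (4*s - x^2) * 1 < (4*s - x^2) * (x*v - s*u)^2 := by
      apply mul_lt_mul_of_pos_left _ hdpos
      nlinarith
    nlinarith [sq_nonneg (v*(2*s - x^2) + s*x*u),
      mul_nonneg (mul_nonneg hs0 hs0) hQ, hTsq]

lemma scalar_bound (x s : ℝ) (hx0 : 0 ≤ x) (hx2 : x ≤ 2)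
    (h1 : x - 1 ≤ s) (h2 : 2*s ≤ x)
    (f : ℕ → ℝ) (hf0 : f 0 = 1) (hf1 : f 1 = x - s)
    (hrec : ∀ k, f (k+2) = x * f (k+1) - s * f k) :
    ∀ k, |f k| ≤ 1 := by
  rcases le_or_gt s 0 with hs | hs
  · have key : ∀ k, |f k| ≤ 1 ∧ |f (k+1)| ≤ 1 := by
      intro k
      induction k with
      | zero =>
        constructor
        · rw [hf0]; simp
        · rw [hf1, abs_le]; constructor <;> linarith
      | succ n ih =>
        obtain ⟨ha, hb⟩ := ih
        refine ⟨hb, ?_⟩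
        rw [abs_le] at *
        rw [hrec n]
        constructor <;> nlinarith [mul_nonneg hx0 (sub_nonneg.2 hb.2),
          mul_nonneg hx0 (by linarith [hb.1] : (0:ℝ) ≤ 1 + f (n+1)),
          mul_nonneg (neg_nonneg.2 hs) (sub_nonneg.2 ha.2),
          mul_nonneg (neg_nonneg.2 hs) (by linarith [ha.1] : (0:ℝ) ≤ 1 + f n)]
    exact fun k => (key k).1
  rcases le_or_gt (x^2) (4*s) with hc | hc
  · have hs1 : s ≤ 1 := by linarith
    have hE0 : 0 ≤ 1 + s - x := by nlinarith [sq_nonneg (x-2)]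
    have key : ∀ k, |f k| ≤ 1 ∧ |f (k+1)| ≤ 1 ∧
        (f (k+1))^2 - x * (f k) * (f (k+1)) + s * (f k)^2 ≤ 1 + s - x := by
      intro k
      induction k with
      | zero =>
        refine ⟨by rw [hf0]; simp, ?_, ?_⟩
        · rw [hf1, abs_le]; constructor <;> linarith
        · rw [hf0, hf1]; nlinarith
      | succ n ih =>
        obtain ⟨ha, hb, hE⟩ := ih
        have hEnonneg : 0 ≤ (f (n+1))^2 - x * (f n) * (f (n+1)) + s * (f n)^2 := by
          nlinarith [sq_nonneg (2*s*(f n) - x*(f (n+1))), mul_nonneg hs.le (sq_nonneg (f (n+1))),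
            sq_nonneg (f (n+1))]
        rw [abs_le] at ha hb
        have hup : f (n+2) ≤ 1 := by
          rw [hrec n]
          exact static_one x s (f n) (f (n+1)) hx0 hx2 hc h2 ha.1 ha.2 hb.1 hb.2 hE
        have hlo : -1 ≤ f (n+2) := by
          rw [hrec n]
          have := static_one x s (-(f n)) (-(f (n+1))) hx0 hx2 hc h2
            (by linarith [ha.2]) (by linarith [ha.1]) (by linarith [hb.2]) (by linarith [hb.1])
            (by nlinarith)
          nlinarith
        refine ⟨abs_le.2 hb, abs_le.2 ⟨hlo, hup⟩, ?_⟩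
        have hid : (f (n+2))^2 - x * (f (n+1)) * (f (n+2)) + s * (f (n+1))^2
            = s * ((f (n+1))^2 - x * (f n) * (f (n+1)) + s * (f n)^2) := by
          rw [hrec n]; ring
        rw [hid]
        calc s * ((f (n+1))^2 - x * (f n) * (f (n+1)) + s * (f n)^2)
            ≤ s * (1 + s - x) := mul_le_mul_of_nonneg_left hE hs.le
          _ ≤ 1 + s - x := by nlinarith
    exact fun k => (key k).1
  · have key : ∀ k, 0 ≤ f k ∧ f k ≤ 1 ∧ (x/2) * f k ≤ f (k+1) ∧ f (k+1) ≤ f k := by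
      intro k
      induction k with
      | zero =>
        rw [hf0, hf1]
        refine ⟨by norm_num, le_refl 1, by linarith, by linarith⟩
      | succ n ih =>
        obtain ⟨h0, h1', hlo, hup⟩ := ih
        have h0' : 0 ≤ f (n+1) := le_trans (by positivity) hlo
        have h1'' : f (n+1) ≤ 1 := le_trans hup h1'
        refine ⟨h0', h1'', ?_, ?_⟩
        · rw [hrec n]
          nlinarith [mul_le_mul_of_nonneg_left hlo (le_of_lt (by linarith : (0:ℝ) < x/2)),
            mul_nonneg (by linarith : (0:ℝ) ≤ x^2 - 4*s) h0]
        · rw [hrec n]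
          rcases le_or_gt x 1 with hx1 | hx1
          · nlinarith [mul_nonneg hs.le h0]
          · nlinarith [mul_le_mul_of_nonneg_left hup (by linarith : (0:ℝ) ≤ x - 1),
              mul_le_mul_of_nonneg_right (by linarith : x - 1 ≤ s) h0]
    intro k
    rw [abs_le]
    exact ⟨by linarith [(key k).1], (key k).2.1⟩

/-- For the operator Chebyshev polynomials `U_k(L, S)` built from a bounded
self-adjoint operator `L` with `σ(L) ⊆ [0, 2]` and
`S = (1 + τa)⁻¹·L − ((1 − τa)/(1 + τa))·I` (with `τ, a > 0`, `1 − τa > 0`),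
one has `‖U_k(L, S) − S·U_{k−1}(L, S)‖ ≤ √2` for all `k ≥ 1`. -/
theorem norm_chebU_op_sub_S_mul_le_sqrt_two
    {H : Type*} [NormedAddCommGroup H] [InnerProductSpace ℂ H] [CompleteSpace H]
    (L : H →L[ℂ] H) (hL : IsSelfAdjoint L)
    (hspec : spectrum ℂ L ⊆ Complex.ofReal '' Set.Icc (0 : ℝ) 2)
    (τ a : ℝ) (hτ : 0 < τ) (ha : 0 < a) (hτa : 0 < 1 - τ * a)
    (S : H →L[ℂ] H)
    (hS : S = (((1 + τ * a : ℝ) : ℂ))⁻¹ • L - (((1 - τ * a) / (1 + τ * a) : ℝ) : ℂ) • 1)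
    (U : ℕ → (H →L[ℂ] H))
    (hU0 : U 0 = 1) (hU1 : U 1 = L)
    (hUrec : ∀ k : ℕ, U (k + 2) = L * U (k + 1) - S * U k) :
    ∀ k : ℕ, 1 ≤ k → ‖U k - S * U (k - 1)‖ ≤ Real.sqrt 2 := by
  have hsqrt2 : (1:ℝ) ≤ Real.sqrt 2 := by
    rw [show (1:ℝ) = Real.sqrt 1 by simp]
    exact Real.sqrt_le_sqrt (by norm_num)
  -- trivial case
  rcases subsingleton_or_nontrivial H with hH | hH
  · intro k hk
    have : U k - S * U (k-1) = 0 := by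
      ext x; exact Subsingleton.elim _ _
    rw [this, norm_zero]; linarith
  set t : ℝ := τ * a with ht_def
  have ht0 : 0 < t := mul_pos hτ ha
  have ht1 : t < 1 := by linarith
  have h1t : (0:ℝ) < 1 + t := by linarith
  -- the polynomial q
  set q : ℂ[X] := C (((1 + t : ℝ) : ℂ))⁻¹ * X - C (((1 - t)/(1 + t) : ℝ) : ℂ) with hq_def
  -- commutation and selfadjointness facts
  have hLS : Commute L S := by
    rw [hS]
    exact (Commute.refl L).smul_right _ |>.sub_right ((Commute.one_right L).smul_right _)
  have hSsa : IsSelfAdjoint S := by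
    rw [hS, IsSelfAdjoint, star_sub, star_smul, star_smul, star_one, hL.star_eq,
      star_inv₀, Complex.star_def, Complex.conj_ofReal]
    simp [Complex.conj_ofReal]
  have hUprop : ∀ k, IsSelfAdjoint (U k) ∧ Commute L (U k) ∧ Commute S (U k) := by
    intro k
    induction k using Nat.twoStepInduction with
    | zero => rw [hU0]; exact ⟨IsSelfAdjoint.one _, Commute.one_right L, Commute.one_right S⟩
    | one => rw [hU1]; exact ⟨hL, Commute.refl L, hLS.symm⟩
    | more n ihn ihn1 =>
      obtain ⟨sa_n, cL_n, cS_n⟩ := ihn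
      obtain ⟨sa_n1, cL_n1, cS_n1⟩ := ihn1
      rw [hUrec n]
      refine ⟨?_, ?_, ?_⟩
      · have : star (L * U (n+1) - S * U n) = L * U (n+1) - S * U n := by
          rw [star_sub, star_mul, star_mul, sa_n1.star_eq, sa_n.star_eq, hL.star_eq,
            hSsa.star_eq, ← cL_n1.eq, ← cS_n.eq]
        exact this
      · exact ((Commute.refl L).mul_right cL_n1).sub_right (hLS.mul_right cL_n)
      · exact (hLS.symm.mul_right cS_n1).sub_right ((Commute.refl S).mul_right cS_n)
  -- aeval of q
  have haevalq : aeval L q = S := by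
    rw [hq_def, hS]
    simp [Algebra.smul_def, Polynomial.aeval_C, Polynomial.aeval_X, map_sub, map_mul]
  -- aeval of chebF
  have haevalF : ∀ k, aeval L (chebF q (k+1)) = U (k+1) - S * U k := by
    intro k
    induction k using Nat.twoStepInduction with
    | zero =>
      show aeval L (chebF q 1) = _
      rw [show chebF q 1 = X - q from rfl]
      rw [map_sub, aeval_X, haevalq, hU1, hU0, mul_one]
    | one =>
      show aeval L (chebF q 2) = _
      rw [show chebF q 2 = X * chebF q 1 - q * chebF q 0 from rfl,
        show chebF q 1 = X - q from rfl, show chebF q 0 = 1 from rfl]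
      rw [hUrec 0, hU1, hU0]
      simp only [map_sub, map_mul, map_one, aeval_X, haevalq, mul_one]
      rw [mul_sub, ← hLS.eq]
      abel
    | more n ihn ihn1 =>
      rw [show chebF q (n+3) = X * chebF q (n+2) - q * chebF q (n+1) from rfl]
      rw [map_sub, map_mul, map_mul, aeval_X, haevalq, ihn1, ihn, hUrec (n+1), hUrec n]
      have h2 : ∀ V : H →L[ℂ] H, L * (S * V) = S * (L * V) := fun V => by
        rw [← mul_assoc, hLS.eq, mul_assoc]
      simp only [mul_sub, sub_mul, mul_assoc, h2]
      abel
  -- eval of q at real points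
  have hevalq : ∀ x : ℝ, eval (x:ℂ) q = (((x - (1 - t))/(1 + t) : ℝ) : ℂ) := by
    intro x
    have h1tc : ((1 + t : ℝ) : ℂ) ≠ 0 := Complex.ofReal_ne_zero.mpr h1t.ne'
    rw [hq_def]
    simp only [eval_sub, eval_mul, eval_C, eval_X]
    push_cast
    field_simp
  -- eval of chebF at real points
  have hevalF : ∀ x : ℝ, ∀ k, eval (x:ℂ) (chebF q k)
      = ((chebf x ((x - (1 - t))/(1 + t)) k : ℝ) : ℂ) := by
    intro x k
    induction k using Nat.twoStepInduction with
    | zero => simp [chebF, chebf]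
    | one =>
      rw [show chebF q 1 = X - q from rfl, eval_sub, eval_X, hevalq]
      rw [show chebf x ((x - (1 - t))/(1 + t)) 1 = x - (x - (1 - t))/(1 + t) from rfl]
      push_cast
      ring
    | more n ihn ihn1 =>
      rw [show chebF q (n+2) = X * chebF q (n+1) - q * chebF q n from rfl,
        eval_sub, eval_mul, eval_mul, eval_X, hevalq, ihn, ihn1,
        show chebf x ((x - (1 - t))/(1 + t)) (n+2)
          = x * chebf x ((x - (1 - t))/(1 + t)) (n+1)
            - ((x - (1 - t))/(1 + t)) * chebf x ((x - (1 - t))/(1 + t)) n from rfl]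
      push_cast
      ring
  -- main
  intro k hk
  obtain ⟨n, rfl⟩ : ∃ n, k = n + 1 := ⟨k - 1, (Nat.succ_pred_eq_of_pos hk).symm⟩
  rw [Nat.add_sub_cancel]
  set D : H →L[ℂ] H := U (n+1) - S * U n with hD_def
  have hDsa : IsSelfAdjoint D := by
    obtain ⟨sa_n, -, cS_n⟩ := hUprop n
    obtain ⟨sa_n1, -, -⟩ := hUprop (n+1)
    rw [hD_def, IsSelfAdjoint, star_sub, star_mul, sa_n.star_eq, sa_n1.star_eq, hSsa.star_eq,
      ← cS_n.eq]
  have hD : D = aeval L (chebF q (n+1)) := (haevalF n).symm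
  have hnorm_spec : ∀ z ∈ spectrum ℂ D, ‖z‖₊ ≤ 1 := by
    intro z hz
    rw [hD, spectrum.map_polynomial_aeval_of_nonempty L _ (spectrum.nonempty L)] at hz
    obtain ⟨w, hw, rfl⟩ := hz
    obtain ⟨x, hx, rfl⟩ := hspec hw
    show ‖eval ((x:ℝ):ℂ) (chebF q (n+1))‖₊ ≤ 1
    rw [hevalF x (n+1)]
    set sx : ℝ := (x - (1 - t))/(1 + t) with hsx_def
    have hx0 : 0 ≤ x := hx.1
    have hx2 : x ≤ 2 := hx.2
    have hsx_eq : sx * (1 + t) = x - (1 - t) := by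
      rw [hsx_def]; field_simp
    have hxs1 : x - 1 ≤ sx := by nlinarith
    have hxs2 : 2 * sx ≤ x := by nlinarith
    have hbound := scalar_bound x sx hx0 hx2 hxs1 hxs2 (chebf x sx) rfl rfl
      (fun k => rfl) (n+1)
    have : ‖(((chebf x sx (n+1) : ℝ)) : ℂ)‖ ≤ 1 := by
      rw [Complex.norm_real]
      exact hbound
    rw [← NNReal.coe_le_coe]
    simpa [coe_nnnorm] using this
  have hrad : spectralRadius ℂ D ≤ 1 := by
    unfold spectralRadius
    exact iSup₂_le fun z hz => by
      rw [← ENNReal.coe_one, ENNReal.coe_le_coe]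
      exact hnorm_spec z hz
  have hnn : (‖D‖₊ : ENNReal) ≤ 1 := hDsa.spectralRadius_eq_nnnorm ▸ hrad
  have hnorm : ‖D‖ ≤ 1 := by
    rw [ENNReal.coe_le_one_iff] at hnn
    calc ‖D‖ = (‖D‖₊ : ℝ) := (coe_nnnorm D).symm
      _ ≤ 1 := NNReal.coe_le_coe.2 hnn
  linarith
end
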